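/- arXiv:2101.11584 — 7 statements merged into one kernel-verified Lean document; each statement's English description precedes it below -/
import Mathlib

section
/- Define χ : ℝ → ℝ by χ(x) = (2/π)∫₀ˣ (1−cos y)/y² dy, where the integrand is extended continuously by the value 1/2 at y = 0. Then χ is odd, non-decreasing, χ(x) → 1 as x → +∞ and χ(x) → −1 as x → −∞ (so χ is a normalizing function), and for every x > 0 one has 0 < 1 − χ(x) < 4/(πx). -/
open Filter

/-- The function `χ(x) = (2/π) ∫₀ˣ (1 - cos y)/y² dy`, where the integrand is extended
continuously by the value `1/2` at `y = 0`. -/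
noncomputable def chiFun (x : ℝ) : ℝ :=
  (2 / Real.pi) * ∫ y in (0 : ℝ)..x, (if y = 0 then (1 / 2 : ℝ) else (1 - Real.cos y) / y ^ 2)

/-!
The integrand equals `sinc (y / 2) ^ 2 / 2`, a continuous, even, nonnegative function; this gives
continuity, oddness and monotonicity of `χ`. The limits and the tail bound rest on
`∫₀^∞ (1 - cos y) / y² dy = π / 2`, obtained by writing `1 / y² = ∫₀^∞ t e^{-ty} dt` and swapping
the integrals: `∫₀^∞ t e^{-ty} (1 - cos y) dy = 1 / (1 + t²)`, whose integral over `t > 0` is `π / 2`.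
Then `1 - χ(x) = (2/π) ∫ₓ^∞ (1 - cos y) / y² dy`, and `0 ≤ (1 - cos y) / y² ≤ 2 / y²` with both
inequalities strict near the zeros of `cos`.
-/

open Real MeasureTheory Set Topology

theorem setIntegral_pos_of_continuousOn {X : Type*} [TopologicalSpace X] [MeasurableSpace X]
    [OpensMeasurableSpace X] {μ : Measure X} [μ.IsOpenPosMeasure] {f : X → ℝ} {s : Set X} {x : X}
    (hs : IsOpen s) (hf : ContinuousOn f s) (hfi : IntegrableOn f s μ)
    (hnonneg : ∀ y ∈ s, 0 ≤ f y) (hx : x ∈ s) (hfx : 0 < f x) : 0 < ∫ y in s, f y ∂μ := by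
  rw [setIntegral_pos_iff_support_of_nonneg_ae ((ae_restrict_iff' hs.measurableSet).2
    (ae_of_all μ hnonneg)) hfi]
  refine (IsOpen.measure_pos μ (hf.isOpen_inter_preimage hs isOpen_Ioi) ⟨x, hx, hfx⟩).trans_le
    (measure_mono fun y ⟨hys, hy⟩ => ⟨(ne_of_lt hy).symm, hys⟩)

lemma integrableOn_Ioi_inv_sq {x : ℝ} (hx : 0 < x) :
    IntegrableOn (fun y : ℝ => (y ^ 2)⁻¹) (Ioi x) := by
  refine (integrableOn_Ioi_rpow_of_lt (a := -2) (by norm_num) hx).congr_fun (fun y hy => ?_)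
    measurableSet_Ioi
  dsimp only
  rw [rpow_neg (hx.trans hy).le, rpow_two]

lemma integral_Ioi_inv_sq {x : ℝ} (hx : 0 < x) : ∫ y in Ioi x, (y ^ 2)⁻¹ = x⁻¹ := by
  have h : EqOn (fun y : ℝ => (y ^ 2)⁻¹) (fun y => y ^ (-2 : ℝ)) (Ioi x) := fun y hy => by
    dsimp only
    rw [rpow_neg (hx.trans hy).le, rpow_two]
  rw [setIntegral_congr_fun measurableSet_Ioi h, integral_Ioi_rpow_of_lt (by norm_num) hx]
  norm_num [rpow_neg_one]

lemma hasDerivAt_exp_neg_mul_one_sub_cos_primitive (t y : ℝ) :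
    HasDerivAt (fun y => exp (-(t * y)) * ((t ^ 2 * cos y - t * sin y) / (1 + t ^ 2) - 1))
      (t * exp (-(t * y)) * (1 - cos y)) y := by
  have h := ((((hasDerivAt_id y).const_mul t).neg).exp).mul
    ((((hasDerivAt_cos y).const_mul (t ^ 2)).sub ((hasDerivAt_sin y).const_mul t)).div_const
      (1 + t ^ 2) |>.sub_const 1)
  refine h.congr_deriv ?_
  simp only [Pi.neg_apply, Pi.sub_apply, id]
  field_simp
  ring

lemma integrableOn_mul_exp_neg_mul_one_sub_cos {t : ℝ} (ht : 0 < t) :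
    IntegrableOn (fun y => t * exp (-(t * y)) * (1 - cos y)) (Ioi 0) := by
  have hexp : IntegrableOn (fun y => 2 * t * exp (-(t * y))) (Ioi 0) := by
    have h := (exp_neg_integrableOn_Ioi 0 ht).const_mul (2 * t)
    simp only [neg_mul] at h
    exact h
  refine hexp.mono' (by fun_prop) (Eventually.of_forall fun y => ?_)
  rw [norm_of_nonneg (mul_nonneg (by positivity) (by linarith [cos_le_one y]))]
  have hcos := neg_one_le_cos y
  have hpos := exp_pos (-(t * y))
  nlinarith [mul_pos ht hpos]

lemma integral_Ioi_mul_exp_neg_mul_one_sub_cos {t : ℝ} (ht : 0 < t) :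
    ∫ y in Ioi 0, t * exp (-(t * y)) * (1 - cos y) = 1 / (1 + t ^ 2) := by
  set G : ℝ → ℝ := fun y => (t ^ 2 * cos y - t * sin y) / (1 + t ^ 2) - 1
  have hG : ∀ y, |G y| ≤ t ^ 2 + t + 1 := by
    intro y
    have hnum : |t ^ 2 * cos y - t * sin y| ≤ t ^ 2 + t := by
      refine (abs_sub _ _).trans (add_le_add ?_ ?_) <;>
        rw [abs_mul, abs_of_nonneg (by positivity)]
      · exact mul_le_of_le_one_right (by positivity) (abs_cos_le_one y)
      · exact mul_le_of_le_one_right ht.le (abs_sin_le_one y)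
    have hden : |(t ^ 2 * cos y - t * sin y) / (1 + t ^ 2)| ≤ t ^ 2 + t := by
      rw [abs_div, abs_of_pos (by positivity : (0 : ℝ) < 1 + t ^ 2)]
      exact (div_le_self (abs_nonneg _) (by nlinarith)).trans hnum
    simpa using (abs_sub _ _).trans (add_le_add hden (abs_one (α := ℝ)).le)
  have hlim : Tendsto (fun y => exp (-(t * y)) * G y) atTop (𝓝 0) := by
    refine Tendsto.zero_mul_isBoundedUnder_le ?_ ⟨t ^ 2 + t + 1, ?_⟩
    · exact tendsto_exp_atBot.comp (tendsto_neg_atTop_atBot.comp (tendsto_id.const_mul_atTop ht))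
    · exact eventually_map.2 (Eventually.of_forall fun y => (norm_eq_abs _).le.trans (hG y))
  rw [integral_Ioi_of_hasDerivAt_of_tendsto'
    (fun y _ => hasDerivAt_exp_neg_mul_one_sub_cos_primitive t y)
    (integrableOn_mul_exp_neg_mul_one_sub_cos ht) hlim]
  simp only [mul_zero, neg_zero, exp_zero, cos_zero, sin_zero]
  field_simp
  ring

lemma integral_Ioi_mul_exp_neg_mul {y : ℝ} (hy : 0 < y) :
    ∫ t in Ioi 0, t * exp (-(t * y)) = 1 / y ^ 2 := by
  have h := integral_rpow_mul_exp_neg_mul_Ioi two_pos hy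
  rw [show (2 : ℝ) - 1 = 1 by norm_num, Gamma_two, rpow_two] at h
  simpa only [rpow_one, mul_comm _ y, mul_one, div_pow, one_pow] using h

lemma integrable_prod_mul_exp_neg_mul_one_sub_cos :
    Integrable (fun p : ℝ × ℝ => p.1 * exp (-(p.1 * p.2)) * (1 - cos p.2))
      ((volume.restrict (Ioi 0)).prod (volume.restrict (Ioi 0))) := by
  refine (integrable_prod_iff (by fun_prop)).2 ⟨?_, ?_⟩
  · filter_upwards [ae_restrict_mem measurableSet_Ioi] with t (ht : 0 < t)
    exact integrableOn_mul_exp_neg_mul_one_sub_cos ht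
  · refine (integrable_inv_one_add_sq.restrict (s := Ioi 0)).congr ?_
    filter_upwards [ae_restrict_mem measurableSet_Ioi] with t (ht : 0 < t)
    have hnonneg (y : ℝ) : 0 ≤ t * exp (-(t * y)) * (1 - cos y) :=
      mul_nonneg (by positivity) (sub_nonneg.2 (cos_le_one y))
    simp only [norm_of_nonneg (hnonneg _), integral_Ioi_mul_exp_neg_mul_one_sub_cos ht, one_div]

theorem integral_Ioi_one_sub_cos_div_sq : ∫ y in Ioi 0, (1 - cos y) / y ^ 2 = π / 2 := by
  have hswap := integral_integral_swap (f := fun t y => t * exp (-(t * y)) * (1 - cos y))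
    integrable_prod_mul_exp_neg_mul_one_sub_cos
  have hleft : ∫ t in Ioi 0, ∫ y in Ioi 0, t * exp (-(t * y)) * (1 - cos y) = π / 2 := by
    rw [setIntegral_congr_fun measurableSet_Ioi
      fun t ht => integral_Ioi_mul_exp_neg_mul_one_sub_cos ht]
    simp [integral_Ioi_inv_one_add_sq]
  have hright : ∫ y in Ioi 0, ∫ t in Ioi 0, t * exp (-(t * y)) * (1 - cos y) =
      ∫ y in Ioi 0, (1 - cos y) / y ^ 2 := by
    refine setIntegral_congr_fun measurableSet_Ioi fun y hy => ?_
    rw [integral_mul_const, integral_Ioi_mul_exp_neg_mul hy, one_div_mul_eq_div]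
  rw [← hright, ← hswap, hleft]

noncomputable def chiDensity (y : ℝ) : ℝ := if y = 0 then 1 / 2 else (1 - cos y) / y ^ 2

lemma chiFun_eq (x : ℝ) : chiFun x = 2 / π * ∫ y in 0..x, chiDensity y := rfl

lemma chiDensity_of_ne_zero {y : ℝ} (hy : y ≠ 0) : chiDensity y = (1 - cos y) / y ^ 2 :=
  if_neg hy

lemma chiDensity_eq_sinc_sq (y : ℝ) : chiDensity y = sinc (y / 2) ^ 2 / 2 := by
  rcases eq_or_ne y 0 with rfl | hy
  · simp [chiDensity]
  · have hcos : cos y = 1 - 2 * sin (y / 2) ^ 2 := by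
      have h := cos_two_mul (y / 2)
      rw [mul_div_cancel₀ y two_ne_zero] at h
      linarith [sin_sq_add_cos_sq (y / 2)]
    rw [chiDensity_of_ne_zero hy, sinc_of_ne_zero (div_ne_zero hy two_ne_zero), hcos]
    field_simp
    ring

lemma continuous_chiDensity : Continuous chiDensity := by
  simp_rw [funext chiDensity_eq_sinc_sq]
  fun_prop

lemma chiDensity_nonneg (y : ℝ) : 0 ≤ chiDensity y := by
  rw [chiDensity_eq_sinc_sq]
  positivity

lemma chiDensity_neg (y : ℝ) : chiDensity (-y) = chiDensity y := by
  rw [chiDensity_eq_sinc_sq, chiDensity_eq_sinc_sq, neg_div, sinc_neg]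

lemma two_mul_inv_sq_sub_chiDensity {y : ℝ} (hy : y ≠ 0) :
    2 * (y ^ 2)⁻¹ - chiDensity y = (1 + cos y) / y ^ 2 := by
  rw [chiDensity_of_ne_zero hy]
  ring

lemma integrableOn_Ioi_chiDensity : IntegrableOn chiDensity (Ioi 0) := by
  have hfar : IntegrableOn chiDensity (Ioi 1) := by
    refine ((integrableOn_Ioi_inv_sq one_pos).const_mul 2).mono'
      continuous_chiDensity.aestronglyMeasurable ?_
    filter_upwards [ae_restrict_mem measurableSet_Ioi] with y (hy : 1 < y)
    have h := two_mul_inv_sq_sub_chiDensity (by positivity : y ≠ 0)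
    have : 0 ≤ (1 + cos y) / y ^ 2 := div_nonneg (by linarith [neg_one_le_cos y]) (by positivity)
    rw [norm_of_nonneg (chiDensity_nonneg y)]
    linarith
  rw [← Ioc_union_Ioi_eq_Ioi zero_le_one]
  exact (continuous_chiDensity.integrableOn_Icc.mono_set Ioc_subset_Icc_self).union hfar

lemma integral_Ioi_chiDensity : ∫ y in Ioi 0, chiDensity y = π / 2 := by
  rw [← integral_Ioi_one_sub_cos_div_sq]
  exact setIntegral_congr_fun measurableSet_Ioi fun y hy => chiDensity_of_ne_zero hy.ne'

lemma one_sub_chiFun_eq {x : ℝ} (hx : 0 ≤ x) :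
    1 - chiFun x = 2 / π * ∫ y in Ioi x, chiDensity y := by
  rw [chiFun_eq, ← intervalIntegral.integral_Ioi_sub_Ioi integrableOn_Ioi_chiDensity hx,
    integral_Ioi_chiDensity]
  field_simp
  ring

lemma exists_gt_cos_eq_zero (x : ℝ) : ∃ y, x < y ∧ cos y = 0 := by
  refine ⟨π / 2 + ⌈x⌉₊ * (2 * π), ?_, by rw [cos_add_nat_mul_two_pi, cos_pi_div_two]⟩
  have := Nat.le_ceil x
  have : (⌈x⌉₊ : ℝ) ≤ ⌈x⌉₊ * (2 * π) :=
    le_mul_of_one_le_right (by positivity) (by linarith [two_le_pi])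
  linarith [pi_pos]

lemma integral_Ioi_chiDensity_pos {x : ℝ} (hx : 0 ≤ x) : 0 < ∫ y in Ioi x, chiDensity y := by
  obtain ⟨c, hxc, hc⟩ := exists_gt_cos_eq_zero x
  refine setIntegral_pos_of_continuousOn isOpen_Ioi continuous_chiDensity.continuousOn
    (integrableOn_Ioi_chiDensity.mono_set (Ioi_subset_Ioi hx)) (fun y _ => chiDensity_nonneg y)
    hxc ?_
  rw [chiDensity_of_ne_zero (hx.trans_lt hxc).ne', hc]
  have := hx.trans_lt hxc
  positivity

lemma integral_Ioi_chiDensity_lt {x : ℝ} (hx : 0 < x) : ∫ y in Ioi x, chiDensity y < 2 / x := by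
  have hdom := (integrableOn_Ioi_inv_sq hx).const_mul 2
  have hint := integrableOn_Ioi_chiDensity.mono_set (Ioi_subset_Ioi hx.le)
  obtain ⟨c, hxc, hc⟩ := exists_gt_cos_eq_zero x
  have hpos : 0 < ∫ y in Ioi x, (2 * (y ^ 2)⁻¹ - chiDensity y) := by
    refine setIntegral_pos_of_continuousOn isOpen_Ioi ?_ (hdom.sub hint) (fun y hy => ?_) hxc ?_
    · exact (continuousOn_const.mul ((continuousOn_pow 2).inv₀
        fun y (hy : x < y) => (pow_pos (hx.trans hy) 2).ne')).sub continuous_chiDensity.continuousOn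
    · rw [two_mul_inv_sq_sub_chiDensity (hx.trans hy).ne']
      exact div_nonneg (by linarith [neg_one_le_cos y]) (sq_nonneg y)
    · rw [two_mul_inv_sq_sub_chiDensity (hx.trans hxc).ne', hc]
      have := hx.trans hxc
      positivity
  rw [integral_sub hdom hint, integral_const_mul, integral_Ioi_inv_sq hx] at hpos
  rw [div_eq_mul_inv]
  linarith

lemma continuous_chiFun : Continuous chiFun :=
  continuous_const.mul (intervalIntegral.continuous_primitive
    (fun _ _ => continuous_chiDensity.intervalIntegrable _ _) 0)

lemma chiFun_neg (x : ℝ) : chiFun (-x) = -chiFun x := by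
  have h : ∫ y in 0..-x, chiDensity y = -∫ y in 0..x, chiDensity y := by
    rw [intervalIntegral.integral_symm, neg_inj]
    simpa [chiDensity_neg] using
      (intervalIntegral.integral_comp_neg (a := 0) (b := x) chiDensity).symm
  rw [chiFun_eq, chiFun_eq, h, mul_neg]

lemma monotone_chiFun : Monotone chiFun := by
  intro a b hab
  rw [chiFun_eq, chiFun_eq, ← sub_nonneg, ← mul_sub,
    intervalIntegral.integral_interval_sub_left (continuous_chiDensity.intervalIntegrable _ _)
      (continuous_chiDensity.intervalIntegrable _ _)]
  exact mul_nonneg (by positivity)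
    (intervalIntegral.integral_nonneg hab fun y _ => chiDensity_nonneg y)

lemma tendsto_chiFun_atTop : Tendsto chiFun atTop (𝓝 1) := by
  have h := (intervalIntegral_tendsto_integral_Ioi 0 integrableOn_Ioi_chiDensity
    tendsto_id).const_mul (2 / π)
  rw [integral_Ioi_chiDensity, div_mul_div_cancel₀' two_ne_zero, div_self pi_ne_zero] at h
  exact h

lemma tendsto_chiFun_atBot : Tendsto chiFun atBot (𝓝 (-1)) := by
  have h := (tendsto_chiFun_atTop.comp tendsto_neg_atBot_atTop).neg
  simpa [Function.comp_def, chiFun_neg] using h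

/-- `χ` is a normalizing function (continuous, odd, non-decreasing, with limits
`±1` at `±∞`), and `0 < 1 - χ(x) < 4/(πx)` for every `x > 0`. -/
theorem stmt2 :
    Continuous chiFun ∧
    (∀ x : ℝ, chiFun (-x) = - chiFun x) ∧
    Monotone chiFun ∧
    Tendsto chiFun atTop (nhds 1) ∧
    Tendsto chiFun atBot (nhds (-1)) ∧
    ∀ x : ℝ, 0 < x → 0 < 1 - chiFun x ∧ 1 - chiFun x < 4 / (Real.pi * x) := by
  refine ⟨continuous_chiFun, chiFun_neg, monotone_chiFun, tendsto_chiFun_atTop,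
    tendsto_chiFun_atBot, fun x hx => ?_⟩
  rw [one_sub_chiFun_eq hx.le]
  refine ⟨mul_pos (by positivity) (integral_Ioi_chiDensity_pos hx.le), ?_⟩
  calc 2 / π * ∫ y in Ioi x, chiDensity y < 2 / π * (2 / x) :=
        mul_lt_mul_of_pos_left (integral_Ioi_chiDensity_lt hx) (by positivity)
    _ = 4 / (π * x) := by field_simp; ring
end

section
/- Let A be a unital C*-algebra and U ∈ A with ‖U‖ ≤ 1; set V = U*. In M₂(A) define W = [[1, U],[0, 1]] · [[1, 0],[−V, 1]] · [[1, U],[0, 1]] · [[0, −1],[1, 0]] and e₁₁ = diag(1, 0). Then W is invertible, P := W e₁₁ W⁻¹ is an idempotent, P equals the matrix [[1−(1−UV)², (2−UV)U(1−VU)], [V(1−UV), (1−VU)²]], ‖P‖ ≤ 64, and ‖P − e₁₁‖ ≤ 5 · max{‖1−UV‖, ‖1−VU‖}. -/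
/-!
Once `W` is multiplied out and its inverse written down, all algebraic claims are
noncommutative polynomial identities in `U` and `V`.

For the norms, a ⋆-homomorphism of C⋆-algebras is contractive, so `diag(a, b)` has norm at most
`max ‖a‖ ‖b‖`; so does the antidiagonal matrix with entries `a, b`, being `diag(a, b)` times a
unitary. Splitting into diagonal and antidiagonal parts gives `‖W⁻¹‖ ≤ 5`. Finally
`P - e₁₁ = (W e₁₁ - e₁₁ W) W⁻¹`, where the commutator is antidiagonal with entries `1 - UV` and
`1 - VU`; the bound on `‖P‖` follows by the triangle inequality.
-/

open Matrix

lemma CStarRing.norm_one_le {E : Type*} [NormedRing E] [StarRing E] [CStarRing E] :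
    ‖(1 : E)‖ ≤ 1 := by
  rcases subsingleton_or_nontrivial E with _ | _
  · simp [Subsingleton.elim (1 : E) 0]
  · exact CStarRing.norm_one.le

lemma IsIdempotentElem.mul_mul_of_mul_eq_one {M : Type*} [Monoid M] {w w' e : M}
    (he : IsIdempotentElem e) (h : w' * w = 1) : IsIdempotentElem (w * e * w') := by
  rw [IsIdempotentElem, show w * e * w' * (w * e * w') = w * e * (w' * w) * e * w' by
    simp only [mul_assoc], h, mul_one, mul_assoc w e e, he.eq]

section Diagonal

variable {n : Type*} [Fintype n] [DecidableEq n]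

def Matrix.diagonalStarAlgHom (R : Type*) {A : Type*} [CommSemiring R] [Semiring A]
    [StarRing A] [Algebra R A] : (n → A) →⋆ₐ[R] Matrix n n A :=
  { diagonalAlgHom R with map_star' := fun v => (diagonal_conjTranspose v).symm }

lemma StarAlgEquiv.norm_symm_diagonal_le {A M : Type*} [CStarAlgebra A] [CStarAlgebra M]
    (φ : M ≃⋆ₐ[ℂ] Matrix n n A) (v : n → A) : ‖φ.symm (diagonal v)‖ ≤ ‖v‖ :=
  NonUnitalStarAlgHom.norm_apply_le
    ((φ.symm : Matrix n n A →⋆ₐ[ℂ] M).comp (diagonalStarAlgHom ℂ)) v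

end Diagonal

namespace StarAlgEquiv

variable {A M : Type*} [CStarAlgebra A] [CStarAlgebra M]
  (φ : M ≃⋆ₐ[ℂ] Matrix (Fin 2) (Fin 2) A)

lemma norm_symm_diag_fin_two_le (a b : A) : ‖φ.symm !![a, 0; 0, b]‖ ≤ max ‖a‖ ‖b‖ := by
  have hdiag : diagonal ![a, b] = !![a, 0; 0, b] := diagonal_fin_two ![a, b]
  rw [← hdiag]
  refine (φ.norm_symm_diagonal_le _).trans ((pi_norm_le_iff_of_nonneg (by positivity)).2 ?_)
  simp [Fin.forall_fin_two]

lemma norm_symm_e11_le : ‖φ.symm !![1, 0; 0, 0]‖ ≤ 1 :=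
  (φ.norm_symm_diag_fin_two_le 1 0).trans (max_le CStarRing.norm_one_le (by simp))

lemma symm_swap_mem_unitary : φ.symm !![0, 1; 1, 0] ∈ unitary M := by
  have hswap : (!![0, 1; 1, 0] : Matrix (Fin 2) (Fin 2) A) * !![0, 1; 1, 0] = 1 := by
    simp [one_fin_two]
  have hstar : star (φ.symm !![0, 1; 1, 0]) = φ.symm !![0, 1; 1, 0] := by
    rw [← map_star]; congr 1; ext i j; fin_cases i <;> fin_cases j <;> simp
  rw [Unitary.mem_iff, hstar, ← map_mul, hswap, map_one]
  exact ⟨rfl, rfl⟩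

lemma norm_symm_antidiag_fin_two_le (a b : A) : ‖φ.symm !![0, a; b, 0]‖ ≤ max ‖a‖ ‖b‖ := by
  have hanti : !![0, a; b, 0] = !![a, 0; 0, b] * !![0, 1; 1, 0] := by simp
  rw [hanti, map_mul, CStarRing.norm_mul_mem_unitary _ φ.symm_swap_mem_unitary]
  exact φ.norm_symm_diag_fin_two_le a b

lemma norm_symm_fin_two_le (a b c d : A) :
    ‖φ.symm !![a, b; c, d]‖ ≤ max ‖a‖ ‖d‖ + max ‖b‖ ‖c‖ := by
  have hsplit : !![a, b; c, d] = !![a, 0; 0, d] + !![0, b; c, 0] := by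
    ext i j; fin_cases i <;> fin_cases j <;> simp
  rw [hsplit, map_add]
  exact (norm_add_le _ _).trans
    (add_le_add (φ.norm_symm_diag_fin_two_le a d) (φ.norm_symm_antidiag_fin_two_le b c))

end StarAlgEquiv

section ShearProduct

variable {R : Type*} [Ring R] (U V : R)

def shearProduct : Matrix (Fin 2) (Fin 2) R :=
  !![(2 - U * V) * U, -(1 - U * V); 1 - V * U, V]

def shearProductInv : Matrix (Fin 2) (Fin 2) R :=
  !![V, 1 - V * U; -(1 - U * V), (2 - U * V) * U]

lemma shears_mul_rotation_eq_shearProduct :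
    !![(1 : R), U; 0, 1] * !![(1 : R), 0; -V, 1] * !![(1 : R), U; 0, 1] * !![(0 : R), -1; 1, 0] =
      shearProduct U V := by
  simp only [shearProduct, mul_fin_two]
  ext i j; fin_cases i <;> fin_cases j <;> simp <;> noncomm_ring

lemma shearProduct_mul_shearProductInv : shearProduct U V * shearProductInv U V = 1 := by
  simp only [shearProduct, shearProductInv, mul_fin_two, one_fin_two]
  ext i j; fin_cases i <;> fin_cases j <;> simp <;> noncomm_ring

lemma shearProductInv_mul_shearProduct : shearProductInv U V * shearProduct U V = 1 := by
  simp only [shearProduct, shearProductInv, mul_fin_two, one_fin_two]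
  ext i j; fin_cases i <;> fin_cases j <;> simp <;> noncomm_ring

lemma shearProduct_mul_e11_mul_shearProductInv :
    shearProduct U V * !![1, 0; 0, 0] * shearProductInv U V =
      !![1 - (1 - U * V) ^ 2, (2 - U * V) * U * (1 - V * U);
         V * (1 - U * V), (1 - V * U) ^ 2] := by
  simp only [shearProduct, shearProductInv, mul_fin_two]
  ext i j; fin_cases i <;> fin_cases j <;> simp <;> noncomm_ring

lemma shearProduct_mul_e11_sub_e11_mul_shearProduct :
    shearProduct U V * !![1, 0; 0, 0] - !![1, 0; 0, 0] * shearProduct U V =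
      !![0, 1 - U * V; 1 - V * U, 0] := by
  ext i j; fin_cases i <;> fin_cases j <;> simp [shearProduct]

end ShearProduct

section Norms

variable {A : Type*} [CStarAlgebra A]

lemma norm_one_sub_mul_le_two {a b : A} (ha : ‖a‖ ≤ 1) (hb : ‖b‖ ≤ 1) : ‖1 - a * b‖ ≤ 2 := by
  have hab : ‖a * b‖ ≤ 1 := (norm_mul_le a b).trans (mul_le_one₀ ha (norm_nonneg b) hb)
  linarith [norm_sub_le (1 : A) (a * b), CStarRing.norm_one_le (E := A)]

lemma StarAlgEquiv.norm_symm_shearProductInv_le {M : Type*} [CStarAlgebra M]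
    (φ : M ≃⋆ₐ[ℂ] Matrix (Fin 2) (Fin 2) A) {U V : A} (hU : ‖U‖ ≤ 1) (hV : ‖V‖ ≤ 1) :
    ‖φ.symm (shearProductInv U V)‖ ≤ 5 := by
  have hUV := norm_one_sub_mul_le_two hU hV
  have hVU := norm_one_sub_mul_le_two hV hU
  have hcorner : ‖(2 - U * V) * U‖ ≤ 3 :=
    calc ‖(2 - U * V) * U‖ = ‖(1 + (1 - U * V)) * U‖ := by congr 1; noncomm_ring
      _ ≤ (‖(1 : A)‖ + ‖1 - U * V‖) * ‖U‖ :=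
        (norm_mul_le _ _).trans (by gcongr; exact norm_add_le _ _)
      _ ≤ (1 + 2) * 1 := by gcongr; exact CStarRing.norm_one_le
      _ = 3 := by norm_num
  calc ‖φ.symm (shearProductInv U V)‖
      ≤ max ‖V‖ ‖(2 - U * V) * U‖ + max ‖1 - V * U‖ ‖-(1 - U * V)‖ :=
        φ.norm_symm_fin_two_le _ _ _ _
    _ ≤ 3 + 2 := by
        rw [norm_neg]
        gcongr <;> apply max_le <;> linarith
    _ = 5 := by norm_num

end Norms

/-- for `U` in a unital C*-algebra `A` with `‖U‖ ≤ 1` and `V = U*`, the matrix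
`W = [[1,U],[0,1]]·[[1,0],[-V,1]]·[[1,U],[0,1]]·[[0,-1],[1,0]]` in `M₂(A)` is invertible,
`P = W e₁₁ W⁻¹` is an idempotent given by the explicit formula, `‖P‖ ≤ 64` and
`‖P - e₁₁‖ ≤ 5·max{‖1-UV‖, ‖1-VU‖}`.  Here `M₂(A)` is represented by a C*-algebra `M2`
together with a ⋆-algebra isomorphism `φ : M2 ≃⋆ₐ[ℂ] Matrix (Fin 2) (Fin 2) A` (recall that
the C*-norm on `M₂(A)` is unique). -/
theorem stmt5 {A : Type*} [CStarAlgebra A]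
    {M2 : Type*} [CStarAlgebra M2] (φ : M2 ≃⋆ₐ[ℂ] Matrix (Fin 2) (Fin 2) A)
    (U V : A) (hU : ‖U‖ ≤ 1) (hV : V = star U)
    (W e₁₁ : M2)
    (hW : φ W = !![(1 : A), U; 0, 1] * !![(1 : A), 0; -V, 1] * !![(1 : A), U; 0, 1] *
        !![(0 : A), -1; 1, 0])
    (he : φ e₁₁ = !![(1 : A), 0; 0, 0]) :
    IsUnit W ∧
    ∃ Winv : M2, W * Winv = 1 ∧ Winv * W = 1 ∧
      ∀ P : M2, P = W * e₁₁ * Winv →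
        IsIdempotentElem P ∧
        φ P = !![1 - (1 - U * V) ^ 2, (2 - U * V) * U * (1 - V * U);
                 V * (1 - U * V), (1 - V * U) ^ 2] ∧
        ‖P‖ ≤ 64 ∧
        ‖P - e₁₁‖ ≤ 5 * max ‖1 - U * V‖ ‖1 - V * U‖ := by
  rw [shears_mul_rotation_eq_shearProduct] at hW
  set Winv := φ.symm (shearProductInv U V)
  have hWinv : φ Winv = shearProductInv U V := φ.apply_symm_apply _
  have hWWinv : W * Winv = 1 := EquivLike.injective φ <| by
    rw [map_mul, hW, hWinv, shearProduct_mul_shearProductInv, map_one]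
  have hWinvW : Winv * W = 1 := EquivLike.injective φ <| by
    rw [map_mul, hW, hWinv, shearProductInv_mul_shearProduct, map_one]
  refine ⟨⟨⟨W, Winv, hWWinv, hWinvW⟩, rfl⟩, Winv, hWWinv, hWinvW, fun P hP => ?_⟩
  have he₁₁ : IsIdempotentElem e₁₁ := EquivLike.injective φ <| by
    rw [map_mul, he, mul_fin_two]; simp
  have hcomm : W * e₁₁ - e₁₁ * W = φ.symm !![0, 1 - U * V; 1 - V * U, 0] := by
    rw [φ.eq_symm_apply, map_sub, map_mul, map_mul, hW, he,
      shearProduct_mul_e11_sub_e11_mul_shearProduct]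
  have hdiff : P - e₁₁ = (W * e₁₁ - e₁₁ * W) * Winv := by
    rw [hP, sub_mul, mul_assoc e₁₁, hWWinv, mul_one]
  have hV₁ : ‖V‖ ≤ 1 := by rwa [hV, norm_star]
  have hdiff_le : ‖P - e₁₁‖ ≤ 5 * max ‖1 - U * V‖ ‖1 - V * U‖ := by
    rw [hdiff, hcomm, mul_comm 5]
    exact norm_mul_le_of_le (φ.norm_symm_antidiag_fin_two_le _ _)
      (φ.norm_symm_shearProductInv_le hU hV₁)
  have he₁₁_le : ‖e₁₁‖ ≤ 1 := by simpa [← he] using φ.norm_symm_e11_le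
  refine ⟨hP ▸ he₁₁.mul_mul_of_mul_eq_one hWinvW, ?_, ?_, hdiff_le⟩
  · rw [hP, map_mul, map_mul, hW, he, hWinv, shearProduct_mul_e11_mul_shearProductInv]
  · have hmax : max ‖1 - U * V‖ ‖1 - V * U‖ ≤ 2 :=
      max_le (norm_one_sub_mul_le_two hU hV₁) (norm_one_sub_mul_le_two hV₁ hU)
    calc ‖P‖ = ‖(P - e₁₁) + e₁₁‖ := by rw [sub_add_cancel]
      _ ≤ 5 * 2 + 1 := (norm_add_le _ _).trans (by linarith)
      _ ≤ 64 := by norm_num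
end

section
/- Let A be a unital C*-algebra equipped with a Lipschitz filtration {A_L}_{L≥0}. Let f(x) = c₁x + c₂x² + c₃x³ + ⋯ be a power series with radius of convergence R, and set f̃(x) = |c₁| + 2|c₂|x + 3|c₃|x² + ⋯. If a ∈ M_n(A)_L and ‖a‖ < R, then f(a) := Σ_{k≥1} c_k a^k converges in M_n(A) and f(a) ∈ M_n(A)_{f̃(‖a‖)·L}. -/
open scoped NNReal

/-- Membership in the matrix level `M_n(A)_L` determined by a filtration `lev` of `A`:
`x ∈ M_n(A)_L` iff `ξᵀ x η ∈ A_L` for all vectors `ξ, η ∈ ℂⁿ` of ℓ²-norm at most `1`. -/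
def MatMem {A : Type*} [CStarAlgebra A] (lev : ℝ≥0 → Set A) {n : ℕ}
    (x : Matrix (Fin n) (Fin n) A) (L : ℝ≥0) : Prop :=
  ∀ ξ η : Fin n → ℂ, (∑ i, ‖ξ i‖ ^ 2) ≤ 1 → (∑ j, ‖η j‖ ^ 2) ≤ 1 →
    (∑ i, ∑ j, (ξ i * η j) • x i j) ∈ lev L

/-- A Lipschitz filtration `{A_L}_{L ≥ 0}` on a unital C*-algebra `A`, in the sense of
conditions (L1)–(L6).  The C*-algebras of matrices `M_n(A)` are represented by C*-algebras
`B n` together with ⋆-algebra isomorphisms `φ n : B n ≃⋆ₐ[ℂ] Matrix (Fin n) (Fin n) A`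
(recall that the C*-norm on `M_n(A)` is unique), and the matrix levels `M_n(A)_L` are the sets
`{b : B n | MatMem level (φ n b) L}`. -/
structure LipschitzFiltration (A : Type*) [CStarAlgebra A] (B : ℕ → Type*)
    [∀ n, CStarAlgebra (B n)] (φ : ∀ n, B n ≃⋆ₐ[ℂ] Matrix (Fin n) (Fin n) A) where
  level : ℝ≥0 → Set A
  mono : ∀ ⦃L L' : ℝ≥0⦄, L ≤ L' → level L ⊆ level L'
  dense_union : Dense (⋃ L : ℝ≥0, level L)
  -- (L1)
  closed : ∀ L, IsClosed (level L)
  star_mem : ∀ (L : ℝ≥0) (a : A), a ∈ level L → star a ∈ level L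
  scalar_mem : ∀ (L : ℝ≥0) (c : ℂ), c • (1 : A) ∈ level L
  -- (L2)
  smul_mem : ∀ (L : ℝ≥0) (c : ℂ) (a : A), a ∈ level L → c • a ∈ level (‖c‖₊ * L)
  -- (L3)
  add_mem : ∀ (L₁ L₂ : ℝ≥0) (a₁ a₂ : A), a₁ ∈ level L₁ → a₂ ∈ level L₂ →
    a₁ + a₂ ∈ level (L₁ + L₂)
  -- (L4)
  mul_mem : ∀ (L₁ L₂ : ℝ≥0) (a₁ a₂ : A), a₁ ∈ level L₁ → a₂ ∈ level L₂ →
    a₁ * a₂ ∈ level (‖a₁‖₊ * L₂ + ‖a₂‖₊ * L₁)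
  -- (L5): the matrix levels satisfy (L1)–(L4) in `M_n(A)` and contain all scalar matrices
  mat_closed : ∀ (n : ℕ) (L : ℝ≥0), IsClosed {b : B n | MatMem level (φ n b) L}
  mat_star : ∀ (n : ℕ) (L : ℝ≥0) (b : B n),
    MatMem level (φ n b) L → MatMem level (φ n (star b)) L
  mat_scalar : ∀ (n : ℕ) (L : ℝ≥0) (c : Matrix (Fin n) (Fin n) ℂ),
    MatMem level (c.map (fun z : ℂ => z • (1 : A))) L
  mat_smul : ∀ (n : ℕ) (L : ℝ≥0) (c : ℂ) (b : B n),
    MatMem level (φ n b) L → MatMem level (φ n (c • b)) (‖c‖₊ * L)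
  mat_add : ∀ (n : ℕ) (L₁ L₂ : ℝ≥0) (b₁ b₂ : B n),
    MatMem level (φ n b₁) L₁ → MatMem level (φ n b₂) L₂ →
      MatMem level (φ n (b₁ + b₂)) (L₁ + L₂)
  mat_mul : ∀ (n : ℕ) (L₁ L₂ : ℝ≥0) (b₁ b₂ : B n),
    MatMem level (φ n b₁) L₁ → MatMem level (φ n b₂) L₂ →
      MatMem level (φ n (b₁ * b₂)) (‖b₁‖₊ * L₂ + ‖b₂‖₊ * L₁)
  -- (L6)
  mat_inv : ∀ (n : ℕ) (L : ℝ≥0) (b : B n) (c : ℂ)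
    (h : IsUnit (b - algebraMap ℂ (B n) c)),
    MatMem level (φ n b) L →
      MatMem level (φ n ((↑h.unit⁻¹ : B n))) (‖(↑h.unit⁻¹ : B n)‖₊ ^ 2 * L)

variable {A : Type*} [CStarAlgebra A] {B : ℕ → Type*} [∀ n, CStarAlgebra (B n)]

/-- `p ∈ P^L_n(A)`: `p` is a projection in `M_n(A)_L`. -/
def PMem (φ : ∀ n, B n ≃⋆ₐ[ℂ] Matrix (Fin n) (Fin n) A)
    (𝓕 : LipschitzFiltration A B φ) {n : ℕ} (L : ℝ≥0) (p : B n) : Prop :=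
  MatMem 𝓕.level (φ n p) L ∧ IsSelfAdjoint p ∧ IsIdempotentElem p

/-- `u ∈ U^L_n(A)`: `u` is a unitary in `M_n(A)_L`. -/
def UMem (φ : ∀ n, B n ≃⋆ₐ[ℂ] Matrix (Fin n) (Fin n) A)
    (𝓕 : LipschitzFiltration A B φ) {n : ℕ} (L : ℝ≥0) (u : B n) : Prop :=
  MatMem 𝓕.level (φ n u) L ∧ u ∈ unitary (B n)

/-- Block-diagonal direct sum `x ⊕ y ∈ M_{n+m}(A)`. -/
def oplus (φ : ∀ n, B n ≃⋆ₐ[ℂ] Matrix (Fin n) (Fin n) A)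
    {n m : ℕ} (x : B n) (y : B m) : B (n + m) :=
  (φ (n + m)).symm
    (Matrix.reindex finSumFinEquiv finSumFinEquiv (Matrix.fromBlocks (φ n x) 0 0 (φ m y)))

/-!
By (L4) and induction, `a ^ k ∈ M_n(A)_{k ‖a‖^(k-1) L}`; with (L2) and (L3) the partial sums
of `f(a)` lie in the levels given by the partial sums of `f̃(‖a‖) L`, and the closedness of the
levels (L5) passes to the limit. The series `f̃(‖a‖)` converges because
`k ‖c_k‖ r^(k-1) ≤ ‖c_k‖ s^k / s` for `r < s < R` and large `k`, as `k (r/s)^(k-1) → 0`.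
The constant term `c_0` needs no assumption: scalars lie in every level.
-/

open Filter Topology

lemma summable_smul_pow {𝕜 E : Type*} [NormedField 𝕜] [NormedRing E] [NormedAlgebra 𝕜 E]
    [CompleteSpace E] (c : ℕ → 𝕜) (a : E) (h : Summable fun k => ‖c k‖ * ‖a‖ ^ k) :
    Summable fun k => c k • a ^ k := by
  refine h.of_norm_bounded_eventually_nat (eventually_gt_atTop 0 |>.mono fun k hk => ?_)
  rw [norm_smul]
  exact mul_le_mul_of_nonneg_left (norm_pow_le' a hk) (norm_nonneg _)

lemma summable_nat_mul_mul_pow_sub_one {u : ℕ → ℝ} (hu : ∀ k, 0 ≤ u k) {r s : ℝ}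
    (hr : 0 ≤ r) (hrs : r < s) (h : Summable fun k => u k * s ^ k) :
    Summable fun k : ℕ => (k : ℝ) * u k * r ^ (k - 1) := by
  have hs : 0 < s := hr.trans_lt hrs
  set t := r / s
  have ht : t < 1 := (div_lt_one hs).2 hrs
  have htend : Tendsto (fun k : ℕ => ((k : ℝ) + 1) * t ^ k) atTop (𝓝 0) := by
    simpa [add_mul] using (tendsto_self_mul_const_pow_of_lt_one (by positivity) ht).add
      (tendsto_pow_atTop_nhds_zero_of_lt_one (by positivity) ht)
  rw [← summable_nat_add_iff 1] at h ⊢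
  refine (h.mul_left s⁻¹).of_norm_bounded_eventually_nat
    ((htend.eventually_le_const zero_lt_one).mono fun k hk => ?_)
  have hr' : r = t * s := (div_mul_cancel₀ r hs.ne').symm
  calc ‖((k + 1 : ℕ) : ℝ) * u (k + 1) * r ^ (k + 1 - 1)‖
      = u (k + 1) * s ^ k * (((k : ℝ) + 1) * t ^ k) := by
        rw [Real.norm_of_nonneg (by have := hu (k + 1); positivity), Nat.add_sub_cancel, hr',
          mul_pow]
        push_cast; ring
    _ ≤ u (k + 1) * s ^ k := mul_le_of_le_one_right (by have := hu (k + 1); positivity) hk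
    _ = s⁻¹ * (u (k + 1) * s ^ (k + 1)) := by field_simp; ring

namespace LipschitzFiltration

variable {φ : ∀ n, B n ≃⋆ₐ[ℂ] Matrix (Fin n) (Fin n) A} (𝓕 : LipschitzFiltration A B φ) {n : ℕ}

lemma matMem_mono {x : Matrix (Fin n) (Fin n) A} {L L' : ℝ≥0} (h : L ≤ L')
    (hx : MatMem 𝓕.level x L) : MatMem 𝓕.level x L' :=
  fun ξ η hξ hη => 𝓕.mono h (hx ξ η hξ hη)

lemma matMem_algebraMap (z : ℂ) (L : ℝ≥0) :
    MatMem 𝓕.level (φ n (algebraMap ℂ (B n) z)) L := by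
  convert 𝓕.mat_scalar n L (Matrix.diagonal fun _ => z) using 1
  ext i j
  rw [AlgHomClass.commutes, Matrix.algebraMap_matrix_apply, Matrix.map_apply,
    Matrix.diagonal_apply, Algebra.algebraMap_eq_smul_one]
  split_ifs <;> simp

lemma matMem_pow_succ {a : B n} {L : ℝ≥0} (ha : MatMem 𝓕.level (φ n a) L) (k : ℕ) :
    MatMem 𝓕.level (φ n (a ^ (k + 1))) ((k + 1) * ‖a‖₊ ^ k * L) := by
  induction k with
  | zero => simpa using ha
  | succ k ih =>
    refine 𝓕.matMem_mono ?_ (pow_succ a (k + 1) ▸ 𝓕.mat_mul n _ _ _ _ ih ha)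
    calc ‖a ^ (k + 1)‖₊ * L + ‖a‖₊ * ((k + 1) * ‖a‖₊ ^ k * L)
        ≤ ‖a‖₊ ^ (k + 1) * L + ‖a‖₊ * ((k + 1) * ‖a‖₊ ^ k * L) := by
          gcongr; exact nnnorm_pow_le' a k.succ_pos
      _ = (↑(k + 1) + 1) * ‖a‖₊ ^ (k + 1) * L := by push_cast; ring

lemma matMem_pow {a : B n} {L : ℝ≥0} (ha : MatMem 𝓕.level (φ n a) L) (k : ℕ) :
    MatMem 𝓕.level (φ n (a ^ k)) (k * ‖a‖₊ ^ (k - 1) * L) := by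
  cases k with
  | zero =>
    have h1 := 𝓕.matMem_algebraMap (n := n) 1 0
    rw [map_one] at h1
    simpa using h1
  | succ k => simpa using 𝓕.matMem_pow_succ ha k

lemma matMem_smul_pow {a : B n} {L : ℝ≥0} (ha : MatMem 𝓕.level (φ n a) L) (z : ℂ) (k : ℕ) :
    MatMem 𝓕.level (φ n (z • a ^ k)) (k * ‖z‖₊ * ‖a‖₊ ^ (k - 1) * L) := by
  convert 𝓕.mat_smul n _ z _ (𝓕.matMem_pow ha k) using 1
  ring

lemma matMem_sum {ι : Type*} (s : Finset ι) {x : ι → B n} {ℓ : ι → ℝ≥0}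
    (h : ∀ i ∈ s, MatMem 𝓕.level (φ n (x i)) (ℓ i)) :
    MatMem 𝓕.level (φ n (∑ i ∈ s, x i)) (∑ i ∈ s, ℓ i) := by
  classical
  induction s using Finset.induction_on with
  | empty => simpa using 𝓕.matMem_algebraMap 0 0
  | insert i s hi ih =>
    rw [Finset.sum_insert hi, Finset.sum_insert hi]
    exact 𝓕.mat_add n _ _ _ _ (h i (Finset.mem_insert_self i s))
      (ih fun j hj => h j (Finset.mem_insert_of_mem hj))

lemma matMem_tsum {ι : Type*} {x : ι → B n} {ℓ : ι → ℝ≥0} (hx : Summable x) (hℓ : Summable ℓ)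
    (h : ∀ i, MatMem 𝓕.level (φ n (x i)) (ℓ i)) :
    MatMem 𝓕.level (φ n (∑' i, x i)) (∑' i, ℓ i) :=
  (𝓕.mat_closed n _).mem_of_tendsto hx.hasSum <| Eventually.of_forall fun s =>
    𝓕.matMem_mono (hℓ.sum_le_tsum s fun _ _ => zero_le) (𝓕.matMem_sum s fun i _ => h i)

end LipschitzFiltration

theorem stmt6_general (φ : ∀ n, B n ≃⋆ₐ[ℂ] Matrix (Fin n) (Fin n) A)
    (𝓕 : LipschitzFiltration A B φ)
    (c : ℕ → ℂ) (R : ℝ)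
    (hR : ∀ r : ℝ, 0 ≤ r → r < R → Summable fun k : ℕ => ‖c k‖ * r ^ k)
    {n : ℕ} (L : ℝ≥0) (a : B n)
    (ha : MatMem 𝓕.level (φ n a) L) (hnorm : ‖a‖ < R) :
    Summable (fun k : ℕ => c k • a ^ k) ∧
    Summable (fun k : ℕ => (k : ℝ) * ‖c k‖ * ‖a‖ ^ (k - 1)) ∧
    MatMem 𝓕.level (φ n (∑' k : ℕ, c k • a ^ k))
      ((∑' k : ℕ, (k : ℝ) * ‖c k‖ * ‖a‖ ^ (k - 1)).toNNReal * L) := by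
  have hf := summable_smul_pow c a (hR _ (norm_nonneg a) hnorm)
  obtain ⟨s, has, hsR⟩ := exists_between hnorm
  have hdf : Summable fun k : ℕ => (k : ℝ) * ‖c k‖ * ‖a‖ ^ (k - 1) :=
    summable_nat_mul_mul_pow_sub_one (fun k => norm_nonneg (c k)) (norm_nonneg a) has
      (hR s ((norm_nonneg a).trans has.le) hsR)
  set g : ℕ → ℝ≥0 := fun k => k * ‖c k‖₊ * ‖a‖₊ ^ (k - 1)
  have hg : (∑' k : ℕ, (k : ℝ) * ‖c k‖ * ‖a‖ ^ (k - 1)) = ∑' k, g k := by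
    simp [g, NNReal.coe_tsum]
  have hgs : Summable g := NNReal.summable_coe.1 (by simpa [g] using hdf)
  refine ⟨hf, hdf, ?_⟩
  rw [hg, Real.toNNReal_coe, ← NNReal.tsum_mul_right]
  exact 𝓕.matMem_tsum hf (hgs.mul_right L) fun k => 𝓕.matMem_smul_pow ha (c k) k

/-- power series applied to a filtered element.  If
`f(x) = Σ_{k ≥ 1} c_k x^k` has radius of convergence (at least) `R`,
`f̃(x) = Σ_{k ≥ 1} k |c_k| x^{k-1}`, `a ∈ M_n(A)_L` and `‖a‖ < R`, then `f(a)` converges in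
`M_n(A)` and `f(a) ∈ M_n(A)_{f̃(‖a‖)·L}`. -/
theorem stmt6 (φ : ∀ n, B n ≃⋆ₐ[ℂ] Matrix (Fin n) (Fin n) A)
    (𝓕 : LipschitzFiltration A B φ)
    (c : ℕ → ℂ) (hc₀ : c 0 = 0) (R : ℝ)
    (hR : ∀ r : ℝ, 0 ≤ r → r < R → Summable fun k : ℕ => ‖c k‖ * r ^ k)
    {n : ℕ} (L : ℝ≥0) (a : B n)
    (ha : MatMem 𝓕.level (φ n a) L) (hnorm : ‖a‖ < R) :
    Summable (fun k : ℕ => c k • a ^ k) ∧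
    Summable (fun k : ℕ => (k : ℝ) * ‖c k‖ * ‖a‖ ^ (k - 1)) ∧
    MatMem 𝓕.level (φ n (∑' k : ℕ, c k • a ^ k))
      ((∑' k : ℕ, (k : ℝ) * ‖c k‖ * ‖a‖ ^ (k - 1)).toNNReal * L) :=
  stmt6_general φ 𝓕 c R hR L a ha hnorm
end

section
/- Let A be a unital C*-algebra equipped with a Lipschitz filtration {A_L}_{L≥0}. If p, q ∈ P^L_n(A) satisfy ‖p − q‖ ≤ 1/12, then there exists a norm-continuous map h : [0,1] → P^{3L}_n(A) with h(0) = p, h(1) = q, and ‖h(t) − h(s)‖ ≤ 3|t − s| for all t, s ∈ [0,1] (i.e. h is a 3-Lipschitz homotopy of projections connecting p and q inside P^{3L}_n(A)). -/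
open scoped NNReal

variable {A : Type*} [CStarAlgebra A] {B : ℕ → Type*} [∀ n, CStarAlgebra (B n)]

/-!
Put `y_t = 2((1 - t)p + tq) - 1`. For projections `p, q` one computes `y_t² = 1 + x_t` with
`x_t = -4t(1 - t)(p - q)²`, and `y_t` commutes with `x_t`. For `‖p - q‖ ≤ 1/12` we have
`‖x_t‖ ≤ 1/144`, so `g_t = (1 + x_t)^(-1/2)` is given by the binomial series, and
`u_t = y_t g_t` is a self-adjoint unitary. Hence `h t = (1 + u_t)/2` is a projection, and
`h 0 = p`, `h 1 = q` because `x_0 = x_1 = 0`.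

The matrix levels are closed, and the Leibniz rule (L4) puts `x^(k+1)` at level `(k+1)‖x‖^k`
times that of `x`; summing the binomial series therefore costs at most a factor
`(1 - ‖x‖)⁻² ≤ 2`. With `y_t` at level `2L`, `x_t` at level `L/3`, `‖y_t‖ ≤ 3` and `‖g_t‖ ≤ 2`,
(L4) puts `h t` at level `(3 · 2L/3 + 2 · 2L)/2 = 3L`. The Lipschitz bound follows from the same
series estimates.
-/

theorem Ring.succ_mul_choose_succ {𝕜 : Type*} [Field 𝕜] [CharZero 𝕜] (r : 𝕜) (k : ℕ) :
    ((k : 𝕜) + 1) * Ring.choose r (k + 1) = (r - k) * Ring.choose r k := by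
  have h := Ring.descPochhammer_eq_factorial_smul_choose r (k + 1)
  rw [descPochhammer_succ_right, Polynomial.smeval_mul,
    Ring.descPochhammer_eq_factorial_smul_choose, Polynomial.smeval_sub, Polynomial.smeval_X,
    Polynomial.smeval_natCast, Nat.factorial_succ] at h
  simp only [nsmul_eq_mul, pow_one, pow_zero, Nat.cast_mul] at h
  apply mul_left_cancel₀ (Nat.cast_ne_zero.mpr k.factorial_ne_zero : (k.factorial : 𝕜) ≠ 0)
  push_cast at h
  linear_combination -h

theorem Ring.norm_choose_le_one {𝕜 : Type*} [RCLike 𝕜] {r : 𝕜} (hr : ‖r‖ ≤ 1) (k : ℕ) :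
    ‖Ring.choose r k‖ ≤ 1 := by
  induction k with
  | zero => simp
  | succ k ih =>
    have h := congrArg norm (Ring.succ_mul_choose_succ r k)
    rw [norm_mul, norm_mul, ← Nat.cast_succ, RCLike.norm_natCast, Nat.cast_succ] at h
    have hrk : ‖r - k‖ ≤ k + 1 := (norm_sub_le _ _).trans (by simp; linarith)
    nlinarith [norm_nonneg (Ring.choose r k), norm_nonneg (r - k)]

theorem Ring.choose_neg_one {R : Type*} [Ring R] [BinomialRing R] (k : ℕ) :
    Ring.choose (-1 : R) k = (-1) ^ k := by
  rw [Ring.choose_neg, add_sub_cancel_left, Ring.choose_natCast, Nat.choose_self, Nat.cast_one,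
    Units.smul_def, Int.coe_negOnePow_natCast, zsmul_one]
  simp

section BinomialSeries

variable {𝕜 E : Type*} [RCLike 𝕜] [NormedRing E] [NormedAlgebra 𝕜 E]

/-- The binomial series of `(1 + x) ^ r`. -/
noncomputable def binomSeries (r : 𝕜) (x : E) : E := ∑' k, Ring.choose r k • x ^ k

variable {r s : 𝕜} {x y : E}

theorem binomSeries_zero_right (r : 𝕜) : binomSeries r (0 : E) = 1 := by
  rw [binomSeries, tsum_eq_single 0 fun k hk => by simp [zero_pow hk]]
  simp

theorem Commute.binomSeries_right {a : E} (h : Commute a x) (r : 𝕜) :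
    Commute a (binomSeries r x) :=
  .tsum_right a fun k => (h.pow_right k).smul_right _

theorem IsSelfAdjoint.binomSeries [StarRing E] [StarModule 𝕜 E] [ContinuousStar E]
    (hr : IsSelfAdjoint r) (hx : IsSelfAdjoint x) : IsSelfAdjoint (binomSeries r x) := by
  rw [IsSelfAdjoint, _root_.binomSeries, tsum_star]
  refine tsum_congr fun k => ?_
  have h := Ring.map_choose (starRingEnd 𝕜) r k
  simp only [starRingEnd_apply] at h
  rw [star_smul, star_pow, hx.star_eq, h, hr.star_eq]

theorem norm_choose_smul_pow_succ_le (hr : ‖r‖ ≤ 1) (x : E) (k : ℕ) :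
    ‖Ring.choose r (k + 1) • x ^ (k + 1)‖ ≤ ‖x‖ ^ (k + 1) :=
  calc ‖Ring.choose r (k + 1) • x ^ (k + 1)‖ ≤ 1 * ‖x‖ ^ (k + 1) :=
        (norm_smul_le _ _).trans <| mul_le_mul (Ring.norm_choose_le_one hr _)
          (norm_pow_le' x k.succ_pos) (norm_nonneg _) zero_le_one
    _ = ‖x‖ ^ (k + 1) := one_mul _

theorem summable_norm_choose_smul_pow (hr : ‖r‖ ≤ 1) (hx : ‖x‖ < 1) :
    Summable fun k => ‖Ring.choose r k • x ^ k‖ :=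
  (summable_nat_add_iff 1).mp <| .of_nonneg_of_le (fun _ => norm_nonneg _)
    (norm_choose_smul_pow_succ_le hr x)
    ((summable_nat_add_iff 1).mpr (summable_geometric_of_lt_one (norm_nonneg x) hx))

theorem norm_pow_succ_sub_pow_succ_le {ρ : ℝ} (hx : ‖x‖ ≤ ρ) (hy : ‖y‖ ≤ ρ) (k : ℕ) :
    ‖x ^ (k + 1) - y ^ (k + 1)‖ ≤ (k + 1) * ρ ^ k * ‖x - y‖ := by
  induction k with
  | zero => simp
  | succ k ih =>
    have hρ : 0 ≤ ρ := (norm_nonneg x).trans hx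
    have hxk : ‖x ^ (k + 1)‖ ≤ ρ ^ (k + 1) :=
      (norm_pow_le' x k.succ_pos).trans (pow_le_pow_left₀ (norm_nonneg x) hx _)
    calc ‖x ^ (k + 1 + 1) - y ^ (k + 1 + 1)‖
        = ‖x ^ (k + 1) * (x - y) + (x ^ (k + 1) - y ^ (k + 1)) * y‖ := by
          rw [pow_succ x (k + 1), pow_succ y (k + 1)]; noncomm_ring
      _ ≤ ρ ^ (k + 1) * ‖x - y‖ + (k + 1) * ρ ^ k * ‖x - y‖ * ρ :=
          (norm_add_le _ _).trans <| add_le_add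
            ((norm_mul_le _ _).trans (by gcongr))
            ((norm_mul_le _ _).trans (mul_le_mul ih hy (norm_nonneg _) (by positivity)))
      _ = (↑(k + 1) + 1) * ρ ^ (k + 1) * ‖x - y‖ := by push_cast; ring

variable [CompleteSpace E]

theorem binomSeries_add (hr : ‖r‖ ≤ 1) (hs : ‖s‖ ≤ 1) (hx : ‖x‖ < 1) :
    binomSeries (r + s) x = binomSeries r x * binomSeries s x := by
  rw [binomSeries, binomSeries, binomSeries,
    tsum_mul_tsum_eq_tsum_sum_antidiagonal_of_summable_norm
      (summable_norm_choose_smul_pow hr hx) (summable_norm_choose_smul_pow hs hx)]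
  refine tsum_congr fun k => ?_
  rw [Ring.add_choose_eq k (Commute.all r s), Finset.sum_smul]
  refine Finset.sum_congr rfl fun ij hij => ?_
  rw [smul_mul_smul_comm, ← pow_add, Finset.HasAntidiagonal.mem_antidiagonal.mp hij]

theorem one_add_mul_binomSeries_neg_one (hx : ‖x‖ < 1) :
    (1 + x) * binomSeries (-1 : 𝕜) x = 1 := by
  have h : binomSeries (-1 : 𝕜) x = ∑' k, (-x) ^ k :=
    tsum_congr fun k => by rw [Ring.choose_neg_one, ← smul_pow, neg_one_smul]
  rw [h, ← sub_neg_eq_add]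
  exact mul_neg_geom_series (-x) (by rwa [norm_neg])

theorem one_add_mul_binomSeries_neg_half_mul_self (hx : ‖x‖ < 1) :
    (1 + x) * (binomSeries (-2⁻¹ : 𝕜) x * binomSeries (-2⁻¹ : 𝕜) x) = 1 := by
  have h : ‖(-2⁻¹ : 𝕜)‖ ≤ 1 := by norm_num
  rw [← binomSeries_add h h hx, show (-2⁻¹ : 𝕜) + -2⁻¹ = -1 by ring,
    one_add_mul_binomSeries_neg_one hx]

theorem norm_binomSeries_sub_one_le (hr : ‖r‖ ≤ 1) (hx : ‖x‖ < 1) :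
    ‖binomSeries r x - 1‖ ≤ ‖x‖ / (1 - ‖x‖) := by
  rw [binomSeries, (summable_norm_choose_smul_pow hr hx).of_norm.tsum_eq_zero_add]
  simp only [pow_zero, Ring.choose_zero_right, one_smul, add_sub_cancel_left]
  refine tsum_of_norm_bounded (by simpa only [div_eq_mul_inv, ← pow_succ'] using
    (hasSum_geometric_of_lt_one (norm_nonneg x) hx).mul_left ‖x‖)
    (norm_choose_smul_pow_succ_le hr x)

theorem norm_binomSeries_sub_le (hr : ‖r‖ ≤ 1) {ρ : ℝ} (hρ : ρ < 1) (hx : ‖x‖ ≤ ρ)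
    (hy : ‖y‖ ≤ ρ) : ‖binomSeries r x - binomSeries r y‖ ≤ ‖x - y‖ / (1 - ρ) ^ 2 := by
  have hρ0 : 0 ≤ ρ := (norm_nonneg x).trans hx
  have hsx := (summable_norm_choose_smul_pow hr (hx.trans_lt hρ)).of_norm
  have hsy := (summable_norm_choose_smul_pow hr (hy.trans_lt hρ)).of_norm
  have hgeom : HasSum (fun k : ℕ => (k + 1) * ρ ^ k * ‖x - y‖) (‖x - y‖ / (1 - ρ) ^ 2) := by
    have := (hasSum_choose_mul_geometric_of_norm_lt_one 1
      (by rwa [Real.norm_of_nonneg hρ0] : ‖ρ‖ < 1)).mul_right ‖x - y‖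
    simpa [Nat.choose_one_right, div_eq_inv_mul, mul_comm] using this
  rw [binomSeries, binomSeries, ← hsx.tsum_sub hsy, (hsx.sub hsy).tsum_eq_zero_add]
  simp only [pow_zero, sub_self, zero_add, ← smul_sub]
  refine tsum_of_norm_bounded hgeom fun k => (norm_smul_le _ _).trans ?_
  calc _ ≤ 1 * ((k + 1) * ρ ^ k * ‖x - y‖) :=
        mul_le_mul (Ring.norm_choose_le_one hr _) (norm_pow_succ_sub_pow_succ_le hx hy k)
          (norm_nonneg _) zero_le_one
    _ = _ := one_mul _

theorem mul_binomSeries_neg_half_mul_self (hy : y * y = 1 + x) (hyx : Commute y x)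
    (hx : ‖x‖ < 1) :
    y * binomSeries (-2⁻¹ : 𝕜) x * (y * binomSeries (-2⁻¹ : 𝕜) x) = 1 := by
  have hyg := hyx.binomSeries_right (-2⁻¹ : 𝕜)
  rw [hyg.symm.mul_mul_mul_comm, hy, one_add_mul_binomSeries_neg_half_mul_self hx]

end BinomialSeries

theorem IsIdempotentElem.commute_sub_mul_sub {R : Type*} [Ring R] {p q : R}
    (hp : IsIdempotentElem p) (hq : IsIdempotentElem q) : Commute p ((p - q) * (p - q)) := by
  have hp' : ∀ z : R, p * (p * z) = p * z := fun z => by rw [← mul_assoc, hp.eq]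
  rw [Commute, SemiconjBy]
  simp only [mul_sub, sub_mul, mul_assoc, hp.eq, hq.eq, hp']
  abel

theorem isStarProjection_two_inv_smul_one_add {E : Type*} [Ring E] [StarRing E] [Algebra ℂ E]
    [StarModule ℂ E] {u : E} (hu : IsSelfAdjoint u) (huu : u * u = 1) :
    IsStarProjection ((2⁻¹ : ℂ) • (1 + u)) where
  isIdempotentElem := by
    have h : (1 + u) * (1 + u) = (2 : ℂ) • (1 + u) := by
      rw [show (1 + u) * (1 + u) = 1 + u + u + u * u by noncomm_ring, huu]
      module
    rw [IsIdempotentElem, smul_mul_smul_comm, h, smul_smul]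
    norm_num
  isSelfAdjoint :=
    (by simp [IsSelfAdjoint] : IsSelfAdjoint (2⁻¹ : ℂ)).smul ((IsSelfAdjoint.one E).add hu)

section ProjectionPath

variable {E : Type*} [CStarAlgebra E] {p q : E}

theorem norm_binomSeries_le_two {r : ℂ} {x : E} (hr : ‖r‖ ≤ 1) (hx : ‖x‖ ≤ 2⁻¹) :
    ‖binomSeries r x‖ ≤ 2 := by
  have h1 : ‖(1 : E)‖ ≤ 1 := IsStarProjection.norm_le _ (.one E)
  have h := norm_binomSeries_sub_one_le hr (hx.trans_lt (by norm_num))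
  have h2 : ‖x‖ / (1 - ‖x‖) ≤ 1 := by
    rw [div_le_one (by linarith)]; linarith
  calc ‖binomSeries r x‖ ≤ ‖binomSeries r x - 1‖ + ‖(1 : E)‖ := norm_le_norm_sub_add _ _
    _ ≤ 2 := by linarith

noncomputable def segmentSymm (p q : E) (t : ℝ) : E :=
  ((2 * (1 - t) : ℝ) : ℂ) • p + ((2 * t : ℝ) : ℂ) • q - 1

noncomputable def segmentDefect (p q : E) (t : ℝ) : E :=
  ((-(4 * t * (1 - t)) : ℝ) : ℂ) • ((p - q) * (p - q))

noncomputable def projPath (p q : E) (t : ℝ) : E :=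
  (2⁻¹ : ℂ) • (1 + segmentSymm p q t * binomSeries (-2⁻¹ : ℂ) (segmentDefect p q t))

theorem segmentSymm_eq (p q : E) (t : ℝ) :
    segmentSymm p q t = ((1 - 2 * t : ℝ) : ℂ) • (p - q) + (p + q - 1) := by
  rw [segmentSymm]
  push_cast
  module

theorem segmentSymm_sub (p q : E) (t s : ℝ) :
    segmentSymm p q t - segmentSymm p q s = ((2 * (s - t) : ℝ) : ℂ) • (p - q) := by
  rw [segmentSymm, segmentSymm]
  push_cast
  module

theorem segmentDefect_sub (p q : E) (t s : ℝ) :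
    segmentDefect p q t - segmentDefect p q s
      = ((4 * (t - s) * (t + s - 1) : ℝ) : ℂ) • ((p - q) * (p - q)) := by
  rw [segmentDefect, segmentDefect, ← sub_smul]
  congr 1
  push_cast
  ring

theorem segmentSymm_mul_self (hp : IsIdempotentElem p) (hq : IsIdempotentElem q) (t : ℝ) :
    segmentSymm p q t * segmentSymm p q t = 1 + segmentDefect p q t := by
  have hanti : (p - q) * (p + q - 1) + (p + q - 1) * (p - q) = 0 := by
    simp only [mul_sub, sub_mul, mul_add, add_mul, mul_one, one_mul, hp.eq, hq.eq]
    abel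
  have hsq : (p + q - 1) * (p + q - 1) = 1 - (p - q) * (p - q) := by
    simp only [mul_sub, sub_mul, mul_add, add_mul, mul_one, one_mul, hp.eq, hq.eq]
    abel
  have hexp : ∀ c : ℂ, (c • (p - q) + (p + q - 1)) * (c • (p - q) + (p + q - 1))
      = (c * c) • ((p - q) * (p - q)) + c • ((p - q) * (p + q - 1) + (p + q - 1) * (p - q))
        + (p + q - 1) * (p + q - 1) := by
    intro c
    simp only [add_mul, mul_add, smul_mul_assoc, mul_smul_comm, smul_smul, smul_add]
    abel
  rw [segmentSymm_eq, hexp, hanti, hsq, segmentDefect]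
  push_cast
  module

theorem commute_segmentSymm_segmentDefect (hp : IsIdempotentElem p) (hq : IsIdempotentElem q)
    (t s : ℝ) : Commute (segmentSymm p q t) (segmentDefect p q s) := by
  have hqm : Commute q ((p - q) * (p - q)) := by
    simpa only [← neg_sub p q, neg_mul_neg] using hq.commute_sub_mul_sub hp
  refine (((hp.commute_sub_mul_sub hq).smul_left _).add_left (hqm.smul_left _)).sub_left
    (Commute.one_left _) |>.smul_right _

theorem isSelfAdjoint_segmentSymm (hp : IsSelfAdjoint p) (hq : IsSelfAdjoint q) (t : ℝ) :
    IsSelfAdjoint (segmentSymm p q t) :=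
  ((IsSelfAdjoint.smul (Complex.conj_ofReal _) hp).add
    (IsSelfAdjoint.smul (Complex.conj_ofReal _) hq)).sub (.one E)

theorem isSelfAdjoint_segmentDefect (hp : IsSelfAdjoint p) (hq : IsSelfAdjoint q) (t : ℝ) :
    IsSelfAdjoint (segmentDefect p q t) :=
  IsSelfAdjoint.smul (Complex.conj_ofReal _)
    (((hp.sub hq).commute_iff (hp.sub hq)).mp (Commute.refl _))

theorem norm_segmentSymm_le (hp : IsStarProjection p) (hq : IsStarProjection q) {t : ℝ}
    (ht : t ∈ Set.Icc (0 : ℝ) 1) : ‖segmentSymm p q t‖ ≤ 3 := by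
  obtain ⟨ht0, ht1⟩ := ht
  have hp1 := IsStarProjection.norm_le p hp
  have hq1 := IsStarProjection.norm_le q hq
  have h1 : ‖(1 : E)‖ ≤ 1 := IsStarProjection.norm_le _ (.one E)
  calc ‖segmentSymm p q t‖ ≤ 2 * (1 - t) * ‖p‖ + 2 * t * ‖q‖ + ‖(1 : E)‖ := by
        refine (norm_sub_le _ _).trans (add_le_add_left ((norm_add_le _ _).trans_eq ?_) _)
        rw [norm_smul, norm_smul, Complex.norm_real, Complex.norm_real,
          Real.norm_of_nonneg (by linarith), Real.norm_of_nonneg (by linarith)]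
    _ ≤ 3 := by nlinarith

theorem norm_segmentSymm_sub (p q : E) (t s : ℝ) :
    ‖segmentSymm p q t - segmentSymm p q s‖ = 2 * |t - s| * ‖p - q‖ := by
  rw [segmentSymm_sub, norm_smul, Complex.norm_real, Real.norm_eq_abs, abs_mul, abs_two,
    abs_sub_comm]

theorem norm_segmentDefect_le (p q : E) {t : ℝ} (ht : t ∈ Set.Icc (0 : ℝ) 1) :
    ‖segmentDefect p q t‖ ≤ ‖p - q‖ * ‖p - q‖ := by
  obtain ⟨ht0, ht1⟩ := ht
  have hc : |4 * t * (1 - t)| ≤ 1 := by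
    rw [abs_le]; constructor <;> nlinarith [sq_nonneg (2 * t - 1)]
  rw [segmentDefect, norm_smul, Complex.norm_real, Real.norm_eq_abs, abs_neg]
  calc |4 * t * (1 - t)| * ‖(p - q) * (p - q)‖ ≤ 1 * (‖p - q‖ * ‖p - q‖) :=
        mul_le_mul hc (norm_mul_le _ _) (norm_nonneg _) zero_le_one
    _ = ‖p - q‖ * ‖p - q‖ := one_mul _

theorem norm_segmentDefect_le_of_norm_sub_le (hpq : ‖p - q‖ ≤ 1 / 12) {t : ℝ}
    (ht : t ∈ Set.Icc (0 : ℝ) 1) : ‖segmentDefect p q t‖ ≤ 144⁻¹ :=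
  (norm_segmentDefect_le p q ht).trans (by nlinarith [norm_nonneg (p - q)])

theorem norm_segmentDefect_sub_le (p q : E) {t s : ℝ} (ht : t ∈ Set.Icc (0 : ℝ) 1)
    (hs : s ∈ Set.Icc (0 : ℝ) 1) :
    ‖segmentDefect p q t - segmentDefect p q s‖ ≤ 4 * |t - s| * (‖p - q‖ * ‖p - q‖) := by
  obtain ⟨ht0, ht1⟩ := ht
  obtain ⟨hs0, hs1⟩ := hs
  have hc : |t + s - 1| ≤ 1 := by rw [abs_le]; constructor <;> linarith
  rw [segmentDefect_sub, norm_smul, Complex.norm_real, Real.norm_eq_abs, abs_mul, abs_mul,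
    abs_of_pos (by norm_num : (0 : ℝ) < 4)]
  calc 4 * |t - s| * |t + s - 1| * ‖(p - q) * (p - q)‖
      ≤ 4 * |t - s| * 1 * (‖p - q‖ * ‖p - q‖) := by gcongr; exact norm_mul_le _ _
    _ = 4 * |t - s| * (‖p - q‖ * ‖p - q‖) := by ring

theorem projPath_zero (p q : E) : projPath p q 0 = p := by
  simp only [projPath, segmentDefect, segmentSymm]
  simp [binomSeries_zero_right]

theorem projPath_one (p q : E) : projPath p q 1 = q := by
  simp only [projPath, segmentDefect, segmentSymm]
  simp [binomSeries_zero_right]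

theorem isStarProjection_projPath (hp : IsStarProjection p) (hq : IsStarProjection q) {t : ℝ}
    (ht : ‖segmentDefect p q t‖ < 1) : IsStarProjection (projPath p q t) := by
  have hyx := commute_segmentSymm_segmentDefect hp.isIdempotentElem hq.isIdempotentElem t t
  have hy := isSelfAdjoint_segmentSymm hp.isSelfAdjoint hq.isSelfAdjoint t
  have hg : IsSelfAdjoint (binomSeries (-2⁻¹ : ℂ) (segmentDefect p q t)) :=
    .binomSeries (by simp [IsSelfAdjoint])
      (isSelfAdjoint_segmentDefect hp.isSelfAdjoint hq.isSelfAdjoint t)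
  exact isStarProjection_two_inv_smul_one_add ((hy.commute_iff hg).mp (hyx.binomSeries_right _))
    (mul_binomSeries_neg_half_mul_self
      (segmentSymm_mul_self hp.isIdempotentElem hq.isIdempotentElem t) hyx ht)

theorem norm_projPath_sub_le (hp : IsStarProjection p) (hq : IsStarProjection q)
    (hpq : ‖p - q‖ ≤ 1 / 12) {t s : ℝ} (ht : t ∈ Set.Icc (0 : ℝ) 1)
    (hs : s ∈ Set.Icc (0 : ℝ) 1) : ‖projPath p q t - projPath p q s‖ ≤ 3 * |t - s| := by
  have hr : ‖(-2⁻¹ : ℂ)‖ ≤ 1 := by norm_num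
  have hδt := norm_segmentDefect_le_of_norm_sub_le hpq ht
  have hδs := norm_segmentDefect_le_of_norm_sub_le hpq hs
  have hgt := norm_binomSeries_le_two hr (hδt.trans (by norm_num))
  have hys := norm_segmentSymm_le hp hq hs
  have hdy : ‖segmentSymm p q t - segmentSymm p q s‖ ≤ |t - s| / 6 := by
    rw [norm_segmentSymm_sub]; nlinarith [abs_nonneg (t - s)]
  have hdg : ‖binomSeries (-2⁻¹ : ℂ) (segmentDefect p q t)
      - binomSeries (-2⁻¹ : ℂ) (segmentDefect p q s)‖ ≤ |t - s| / 18 := by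
    refine (norm_binomSeries_sub_le hr (by norm_num) hδt hδs).trans ?_
    have hpq2 : ‖p - q‖ * ‖p - q‖ ≤ 144⁻¹ := by nlinarith [norm_nonneg (p - q)]
    rw [div_le_iff₀ (by norm_num)]
    nlinarith [norm_segmentDefect_sub_le p q ht hs, abs_nonneg (t - s),
      mul_le_mul_of_nonneg_left hpq2 (abs_nonneg (t - s))]
  have hsplit : projPath p q t - projPath p q s = (2⁻¹ : ℂ) •
      ((segmentSymm p q t - segmentSymm p q s) * binomSeries (-2⁻¹ : ℂ) (segmentDefect p q t)
        + segmentSymm p q s * (binomSeries (-2⁻¹ : ℂ) (segmentDefect p q t)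
          - binomSeries (-2⁻¹ : ℂ) (segmentDefect p q s))) := by
    rw [projPath, projPath, ← smul_sub]
    congr 1
    noncomm_ring
  rw [hsplit, norm_smul, show ‖(2⁻¹ : ℂ)‖ = 2⁻¹ by norm_num]
  calc 2⁻¹ * ‖_‖ ≤ 2⁻¹ * (|t - s| / 6 * 2 + 3 * (|t - s| / 18)) := by
        gcongr
        refine (norm_add_le _ _).trans (add_le_add ?_ ?_) <;> refine (norm_mul_le _ _).trans ?_
        · exact mul_le_mul hdy hgt (norm_nonneg _) (by positivity)
        · exact mul_le_mul hys hdg (norm_nonneg _) (by norm_num)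
    _ ≤ 3 * |t - s| := by linarith [abs_nonneg (t - s)]

end ProjectionPath

namespace LipschitzFiltration

variable {φ : ∀ n, B n ≃⋆ₐ[ℂ] Matrix (Fin n) (Fin n) A} (𝓕 : LipschitzFiltration A B φ) {n : ℕ}

/-- The matrix level `M_n(A)_L`, as a subset of `B n`. -/
def matLevel (n : ℕ) (L : ℝ≥0) : Set (B n) := {b | MatMem 𝓕.level (φ n b) L}

variable {𝓕}

theorem matLevel_mono {L L' : ℝ≥0} (h : L ≤ L') : 𝓕.matLevel n L ⊆ 𝓕.matLevel n L' :=
  fun _ hb ξ η hξ hη => 𝓕.mono h (hb ξ η hξ hη)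

theorem algebraMap_mem_matLevel (c : ℂ) (L : ℝ≥0) : algebraMap ℂ (B n) c ∈ 𝓕.matLevel n L := by
  have h := 𝓕.mat_scalar n L (c • 1)
  have e : (c • (1 : Matrix (Fin n) (Fin n) ℂ)).map (fun z : ℂ => z • (1 : A))
      = φ n (algebraMap ℂ (B n) c) := by
    rw [Algebra.algebraMap_eq_smul_one, map_smul, map_one]
    ext i j
    simp only [Matrix.map_apply, Matrix.smul_apply, Matrix.one_apply, smul_eq_mul]
    split_ifs <;> simp
  rwa [e] at h

theorem one_mem_matLevel (L : ℝ≥0) : (1 : B n) ∈ 𝓕.matLevel n L := by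
  simpa using algebraMap_mem_matLevel (𝓕 := 𝓕) (n := n) 1 L

theorem add_mem_matLevel {a b : B n} {L₁ L₂ : ℝ≥0} (ha : a ∈ 𝓕.matLevel n L₁)
    (hb : b ∈ 𝓕.matLevel n L₂) : a + b ∈ 𝓕.matLevel n (L₁ + L₂) :=
  𝓕.mat_add n L₁ L₂ a b ha hb

theorem mul_mem_matLevel {a b : B n} {L₁ L₂ : ℝ≥0} (ha : a ∈ 𝓕.matLevel n L₁)
    (hb : b ∈ 𝓕.matLevel n L₂) : a * b ∈ 𝓕.matLevel n (‖a‖₊ * L₂ + ‖b‖₊ * L₁) :=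
  𝓕.mat_mul n L₁ L₂ a b ha hb

theorem smul_mem_matLevel {c : ℂ} {b : B n} {C L : ℝ≥0} (hc : ‖c‖₊ ≤ C)
    (hb : b ∈ 𝓕.matLevel n L) : c • b ∈ 𝓕.matLevel n (C * L) :=
  matLevel_mono (by gcongr) (𝓕.mat_smul n L c b hb)

theorem sub_mem_matLevel {a b : B n} {L₁ L₂ : ℝ≥0} (ha : a ∈ 𝓕.matLevel n L₁)
    (hb : b ∈ 𝓕.matLevel n L₂) : a - b ∈ 𝓕.matLevel n (L₁ + L₂) := by
  simpa [sub_eq_add_neg] using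
    add_mem_matLevel ha (smul_mem_matLevel (c := -1) (C := 1) (by simp) hb)

theorem sum_range_mem_matLevel {f : ℕ → B n} {L : ℕ → ℝ≥0} (h : ∀ k, f k ∈ 𝓕.matLevel n (L k))
    (N : ℕ) : ∑ k ∈ Finset.range N, f k ∈ 𝓕.matLevel n (∑ k ∈ Finset.range N, L k) := by
  induction N with
  | zero => simpa using algebraMap_mem_matLevel (𝓕 := 𝓕) (n := n) 0 0
  | succ N ih => simpa only [Finset.sum_range_succ] using add_mem_matLevel ih (h N)

theorem pow_succ_mem_matLevel {a : B n} {Λ : ℝ≥0} (ha : a ∈ 𝓕.matLevel n Λ) (k : ℕ) :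
    a ^ (k + 1) ∈ 𝓕.matLevel n ((k + 1) * ‖a‖₊ ^ k * Λ) := by
  induction k with
  | zero => simpa using ha
  | succ k ih =>
    refine matLevel_mono ?_ (pow_succ a (k + 1) ▸ mul_mem_matLevel ih ha)
    calc ‖a ^ (k + 1)‖₊ * Λ + ‖a‖₊ * ((k + 1) * ‖a‖₊ ^ k * Λ)
        ≤ ‖a‖₊ ^ (k + 1) * Λ + ‖a‖₊ * ((k + 1) * ‖a‖₊ ^ k * Λ) := by
          gcongr; exact nnnorm_pow_le' a k.succ_pos
      _ = (↑(k + 1) + 1) * ‖a‖₊ ^ (k + 1) * Λ := by push_cast; ring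

theorem binomSeries_mem_matLevel {r : ℂ} {a : B n} {Λ : ℝ≥0} (hr : ‖r‖ ≤ 1)
    (ha : a ∈ 𝓕.matLevel n Λ) (ha1 : ‖a‖₊ < 1) :
    binomSeries r a ∈ 𝓕.matLevel n (Λ / (1 - ‖a‖₊) ^ 2) := by
  have ha1' : ‖a‖ < 1 := by rw [← coe_nnnorm]; exact_mod_cast ha1
  set ρ := ‖a‖₊
  have hgeom : HasSum (fun k : ℕ => (k + 1) * ρ ^ k) ((1 - ρ) ^ 2)⁻¹ := by
    rw [← NNReal.hasSum_coe]
    push_cast [NNReal.coe_sub ha1.le]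
    simpa [Nat.choose_one_right] using
      hasSum_choose_mul_geometric_of_norm_lt_one 1 (r := (ρ : ℝ)) (by simpa [ρ] using ha1')
  have hterm : ∀ k : ℕ, Ring.choose r (k + 1) • a ^ (k + 1) ∈ 𝓕.matLevel n ((k + 1) * ρ ^ k * Λ) :=
    fun k => by
      simpa using smul_mem_matLevel (C := 1)
        (by rw [← NNReal.coe_le_coe, coe_nnnorm]; exact Ring.norm_choose_le_one hr (k + 1))
        (pow_succ_mem_matLevel ha k)
  have hpartial : ∀ N, ∑ k ∈ Finset.range (N + 1), Ring.choose r k • a ^ k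
      ∈ 𝓕.matLevel n (Λ / (1 - ρ) ^ 2) := fun N => by
    rw [Finset.sum_range_succ', pow_zero, Ring.choose_zero_right, one_smul]
    refine matLevel_mono ?_ (add_mem_matLevel (sum_range_mem_matLevel hterm N)
      (one_mem_matLevel 0))
    rw [add_zero, ← Finset.sum_mul, div_eq_inv_mul]
    gcongr
    exact sum_le_hasSum _ (fun _ _ => zero_le) hgeom
  have hsum := (summable_norm_choose_smul_pow hr ha1').of_norm
  exact (𝓕.mat_closed n _).mem_of_tendsto
    (hsum.hasSum.tendsto_sum_nat.comp (Filter.tendsto_add_atTop_nat 1))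
    (Filter.Eventually.of_forall hpartial)

theorem binomSeries_mem_matLevel_two_mul {r : ℂ} {a : B n} {Λ : ℝ≥0} (hr : ‖r‖ ≤ 1)
    (ha : a ∈ 𝓕.matLevel n Λ) (ha4 : ‖a‖ ≤ 4⁻¹) : binomSeries r a ∈ 𝓕.matLevel n (2 * Λ) := by
  have ha1 : ‖a‖₊ < 1 := by rw [← NNReal.coe_lt_coe, coe_nnnorm]; push_cast; linarith
  refine matLevel_mono ?_ (binomSeries_mem_matLevel hr ha ha1)
  have h2 : (1 : ℝ) ≤ 2 * (1 - ‖a‖) ^ 2 := by nlinarith [norm_nonneg a]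
  rw [← NNReal.coe_le_coe, NNReal.coe_div, NNReal.coe_pow, NNReal.coe_sub ha1.le, coe_nnnorm,
    NNReal.coe_one, div_le_iff₀ (pow_pos (by linarith) 2)]
  push_cast
  nlinarith [mul_le_mul_of_nonneg_left h2 Λ.coe_nonneg]

variable {p q : B n} {L : ℝ≥0} {t : ℝ}

theorem segmentSymm_mem_matLevel (hpL : p ∈ 𝓕.matLevel n L) (hqL : q ∈ 𝓕.matLevel n L)
    (ht : t ∈ Set.Icc (0 : ℝ) 1) : segmentSymm p q t ∈ 𝓕.matLevel n (2 * L) := by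
  obtain ⟨ht0, ht1⟩ := ht
  refine matLevel_mono ?_ (sub_mem_matLevel (add_mem_matLevel (smul_mem_matLevel le_rfl hpL)
    (smul_mem_matLevel le_rfl hqL)) (one_mem_matLevel 0))
  rw [← NNReal.coe_le_coe]
  simp only [NNReal.coe_add, NNReal.coe_mul, coe_nnnorm, Complex.norm_real, NNReal.coe_zero,
    NNReal.coe_ofNat, Real.norm_of_nonneg (by linarith : 0 ≤ 2 * (1 - t)),
    Real.norm_of_nonneg (by linarith : 0 ≤ 2 * t)]
  nlinarith [L.coe_nonneg]

theorem segmentDefect_mem_matLevel (hpL : p ∈ 𝓕.matLevel n L) (hqL : q ∈ 𝓕.matLevel n L)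
    (hpq : ‖p - q‖ ≤ 1 / 12) (ht : t ∈ Set.Icc (0 : ℝ) 1) :
    segmentDefect p q t ∈ 𝓕.matLevel n (3⁻¹ * L) := by
  obtain ⟨ht0, ht1⟩ := ht
  have hd2 : (p - q) * (p - q) ∈ 𝓕.matLevel n (3⁻¹ * L) := by
    refine matLevel_mono ?_
      (mul_mem_matLevel (sub_mem_matLevel hpL hqL) (sub_mem_matLevel hpL hqL))
    rw [← NNReal.coe_le_coe]
    push_cast
    nlinarith [L.coe_nonneg]
  refine one_mul (3⁻¹ * L) ▸ smul_mem_matLevel ?_ hd2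
  rw [← NNReal.coe_le_coe, coe_nnnorm, Complex.norm_real, NNReal.coe_one, Real.norm_eq_abs,
    abs_le]
  constructor <;> nlinarith [sq_nonneg (2 * t - 1)]

theorem projPath_mem_matLevel (hpL : p ∈ 𝓕.matLevel n L) (hqL : q ∈ 𝓕.matLevel n L)
    (hp : IsStarProjection p) (hq : IsStarProjection q) (hpq : ‖p - q‖ ≤ 1 / 12)
    (ht : t ∈ Set.Icc (0 : ℝ) 1) : projPath p q t ∈ 𝓕.matLevel n (3 * L) := by
  have hr : ‖(-2⁻¹ : ℂ)‖ ≤ 1 := by norm_num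
  have hδ := norm_segmentDefect_le_of_norm_sub_le hpq ht
  have hgn := norm_binomSeries_le_two hr (hδ.trans (by norm_num))
  have hyn := norm_segmentSymm_le hp hq ht
  have hg := binomSeries_mem_matLevel_two_mul hr (segmentDefect_mem_matLevel hpL hqL hpq ht)
    (hδ.trans (by norm_num))
  refine matLevel_mono ?_ (smul_mem_matLevel le_rfl (add_mem_matLevel (one_mem_matLevel 0)
    (mul_mem_matLevel (segmentSymm_mem_matLevel hpL hqL ht) hg)))
  rw [← NNReal.coe_le_coe]
  push_cast
  rw [show ‖(2⁻¹ : ℂ)‖ = 2⁻¹ by norm_num]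
  nlinarith [L.coe_nonneg, norm_nonneg (segmentSymm p q t),
    norm_nonneg (binomSeries (-2⁻¹ : ℂ) (segmentDefect p q t))]

end LipschitzFiltration

/-- projections at level `L` at distance at most `1/12` are joined by a
3-Lipschitz homotopy of projections at level `3L`. -/
theorem stmt7 (φ : ∀ n, B n ≃⋆ₐ[ℂ] Matrix (Fin n) (Fin n) A)
    (𝓕 : LipschitzFiltration A B φ) {n : ℕ} (L : ℝ≥0) (p q : B n)
    (hp : PMem φ 𝓕 L p) (hq : PMem φ 𝓕 L q) (hpq : ‖p - q‖ ≤ 1 / 12) :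
    ∃ h : ℝ → B n,
      h 0 = p ∧ h 1 = q ∧
      (∀ t ∈ Set.Icc (0 : ℝ) 1, PMem φ 𝓕 (3 * L) (h t)) ∧
      (∀ t ∈ Set.Icc (0 : ℝ) 1, ∀ s ∈ Set.Icc (0 : ℝ) 1, ‖h t - h s‖ ≤ 3 * |t - s|) := by
  obtain ⟨hpL, hpsa, hpid⟩ := hp
  obtain ⟨hqL, hqsa, hqid⟩ := hq
  have hpP : IsStarProjection p := ⟨hpid, hpsa⟩
  have hqP : IsStarProjection q := ⟨hqid, hqsa⟩
  refine ⟨projPath p q, projPath_zero p q, projPath_one p q, fun t ht => ?_,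
    fun t ht s hs => norm_projPath_sub_le hpP hqP hpq ht hs⟩
  have hP := isStarProjection_projPath hpP hqP
    ((norm_segmentDefect_le_of_norm_sub_le hpq ht).trans_lt (by norm_num))
  exact ⟨LipschitzFiltration.projPath_mem_matLevel hpL hqL hpP hqP hpq ht, hP.isSelfAdjoint,
    hP.isIdempotentElem⟩
end

section
/- Let {M_L} and {M'_L} be inductive systems over ℝ≥0 and suppose they are controlled isomorphic, i.e. there are controlled homomorphisms ξ : {M_L} → {M'_L} and η : {M'_L} → {M_L} such that ξ∘η ∼ id and η∘ξ ∼ id (controlled equivalences with some control functions). If {M_L} is uniformly controlled, then {M'_L} is uniformly controlled (i.e. admits some uniform control pair). -/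
open scoped NNReal
open Filter

/-- An inductive system of abelian groups over `ℝ≥0`. -/
structure IndSys where
  M : ℝ≥0 → Type*
  inst : ∀ L, AddCommGroup (M L)
  map : ∀ {L L' : ℝ≥0}, L ≤ L' → (M L →+ M L')
  map_refl : ∀ (L : ℝ≥0) (x : M L), map (le_refl L) x = x
  map_comp : ∀ {L L' L'' : ℝ≥0} (h : L ≤ L') (h' : L' ≤ L'') (x : M L),
    map h' (map h x) = map (h.trans h') x

attribute [instance] IndSys.inst

/-- A control function: non-decreasing and tending to infinity. -/
def IsControl (F : ℝ≥0 → ℝ≥0) : Prop := Monotone F ∧ Tendsto F atTop atTop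

/-- A controlled homomorphism between inductive systems, with control function `F`. -/
structure CtrlHom (M N : IndSys) (F : ℝ≥0 → ℝ≥0) where
  ctrl : IsControl F
  f : ∀ L, M.M L →+ N.M (F L)
  compat : ∀ {L L' : ℝ≥0} (h : L ≤ L') (x : M.M L),
    N.map (ctrl.1 h) (f L x) = f L' (M.map h x)

/-- The identity controlled homomorphism, with control function `L ↦ L`. -/
def CtrlHom.id (M : IndSys) : CtrlHom M M (fun L => L) where
  ctrl := ⟨monotone_id, tendsto_id⟩
  f L := AddMonoidHom.id _
  compat _ _ := rfl

/-- The zero controlled homomorphism, with control function `L ↦ L`. -/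
def CtrlHom.zero (M N : IndSys) : CtrlHom M N (fun L => L) where
  ctrl := ⟨monotone_id, tendsto_id⟩
  f _ := 0
  compat _ _ := by simp

/-- Composition of controlled homomorphisms: `(ξ ∘ η)_L = ξ_{G(L)} ∘ η_L`, control `F ∘ G`. -/
def CtrlHom.comp {M N P : IndSys} {F G : ℝ≥0 → ℝ≥0}
    (ξ : CtrlHom N P F) (η : CtrlHom M N G) : CtrlHom M P (fun L => F (G L)) where
  ctrl := ⟨ξ.ctrl.1.comp η.ctrl.1, ξ.ctrl.2.comp η.ctrl.2⟩
  f L := (ξ.f (G L)).comp (η.f L)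
  compat h x := by
    simp only [AddMonoidHom.comp_apply]
    rw [ξ.compat (η.ctrl.1 h), η.compat h]

/-- `ξ` is controlled equivalent to `η` (for some control function `H ≥ F, G`). -/
def CtrlEquiv {M N : IndSys} {F G : ℝ≥0 → ℝ≥0} (ξ : CtrlHom M N F) (η : CtrlHom M N G) :
    Prop :=
  ∃ H : ℝ≥0 → ℝ≥0, IsControl H ∧
    ∃ (hF : ∀ L, F L ≤ H L) (hG : ∀ L, G L ≤ H L),
      ∀ (L : ℝ≥0) (x : M.M L), N.map (hF L) (ξ.f L x) = N.map (hG L) (η.f L x)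

/-- `ξ` is controlled equivalent to the zero homomorphism. -/
def CtrlEquivZero {M N : IndSys} {F : ℝ≥0 → ℝ≥0} (ξ : CtrlHom M N F) : Prop :=
  CtrlEquiv ξ (CtrlHom.zero M N)

/-- `ξ` is controlled equivalent to the identity homomorphism. -/
def CtrlEquivId {M : IndSys} {F : ℝ≥0 → ℝ≥0} (ξ : CtrlHom M M F) : Prop :=
  CtrlEquiv ξ (CtrlHom.id M)

/-- The sequence `M →(ξ) N →(η) P` is asymptotically exact at `N` with control functions
`F₁, F₂`. -/
def AsympExactAt {M N P : IndSys} {F G : ℝ≥0 → ℝ≥0}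
    (ξ : CtrlHom M N F) (η : CtrlHom N P G) (F₁ F₂ : ℝ≥0 → ℝ≥0) : Prop :=
  (IsControl F₁ ∧
    ∃ (h₁ : ∀ L, G (F L) ≤ F₁ L) (_h₂ : ∀ L, L ≤ F₁ L),
      ∀ (L : ℝ≥0) (x : M.M L), P.map (h₁ L) (η.f (F L) (ξ.f L x)) = 0) ∧
  (IsControl F₂ ∧
    ∃ hle : ∀ L, L ≤ F (F₂ L),
      ∀ (L : ℝ≥0) (m' : N.M L), η.f L m' = 0 →
        ∃ m : M.M (F₂ L), ξ.f (F₂ L) m = N.map (hle L) m')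

/-- An inductive system is uniformly controlled with uniform control pair `(L₀, F)`. -/
def UnifCtrlPair (M : IndSys) (L₀ : ℝ≥0) (F : ℝ≥0 → ℝ≥0) : Prop :=
  IsControl F ∧
  ∃ hle : ∀ L, L ≤ F L,
    (∀ L : ℝ≥0, L₀ ≤ L → ∀ (L' : ℝ≥0) (x : M.M L'),
      ∃ (y : M.M L) (L'' : ℝ≥0) (h : L ≤ L'') (h' : L' ≤ L''), M.map h y = M.map h' x) ∧
    (∀ (L : ℝ≥0) (x : M.M L), (∃ (L' : ℝ≥0) (h : L ≤ L'), M.map h x = 0) →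
      M.map (hle L) x = 0)

/-- An inductive system is uniformly controlled. -/
def UnifCtrl (M : IndSys) : Prop := ∃ (L₀ : ℝ≥0) (F : ℝ≥0 → ℝ≥0), UnifCtrlPair M L₀ F

/-!
Let `(L₀, K)` be a uniform control pair of `M` and `H` a control function witnessing
`ξ ∘ η ∼ id`, so that every `x ∈ N_L` agrees with `ξ (η x)` at level `H L`. An element `x` of
`N` then lifts to level `F L₀` as `ξ y`, where `y ∈ M_{L₀}` lifts `η x`. If `x ∈ N_L` dies
eventually, so does `η x`, hence `η x` dies by level `K (G L)` and `ξ (η x)` by level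
`F (K (G L))`; therefore `x` dies by level `max (H L) (F (K (G L)))`.
-/

theorem IsControl.comp {F G : ℝ≥0 → ℝ≥0} (hF : IsControl F) (hG : IsControl G) :
    IsControl (F ∘ G) :=
  ⟨hF.1.comp hG.1, hF.2.comp hG.2⟩

theorem IsControl.max {F G : ℝ≥0 → ℝ≥0} (hF : IsControl F) (hG : IsControl G) :
    IsControl (fun L => max (F L) (G L)) :=
  ⟨hF.1.max hG.1, tendsto_atTop_mono (fun _ => le_max_right _ _) hG.2⟩

namespace IndSys

variable (M : IndSys)

/-- `x` and `y` have the same image in the colimit. -/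
def EventuallyEq {L L' : ℝ≥0} (x : M.M L) (y : M.M L') : Prop :=
  ∃ (L'' : ℝ≥0) (h : L ≤ L'') (h' : L' ≤ L''), M.map h x = M.map h' y

def VanishesAt {L : ℝ≥0} (x : M.M L) (L' : ℝ≥0) : Prop :=
  ∃ h : L ≤ L', M.map h x = 0

/-- `i_{L₀}` is surjective onto the colimit. -/
def SurjAt (L₀ : ℝ≥0) : Prop :=
  ∀ (L : ℝ≥0) (x : M.M L), ∃ y : M.M L₀, M.EventuallyEq y x

def KernelBound (K : ℝ≥0 → ℝ≥0) : Prop :=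
  ∀ (L : ℝ≥0) (x : M.M L), (∃ L', M.VanishesAt x L') → M.VanishesAt x (K L)

variable {M}

theorem eventuallyEq_map {L L' : ℝ≥0} (h : L ≤ L') (x : M.M L) : M.EventuallyEq (M.map h x) x :=
  ⟨L', le_rfl, h, M.map_refl _ _⟩

theorem EventuallyEq.trans {L₁ L₂ L₃ : ℝ≥0} {x : M.M L₁} {y : M.M L₂} {z : M.M L₃}
    (hxy : M.EventuallyEq x y) (hyz : M.EventuallyEq y z) : M.EventuallyEq x z := by
  obtain ⟨A, hxA, hyA, hA⟩ := hxy
  obtain ⟨B, hyB, hzB, hB⟩ := hyz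
  refine ⟨max A B, hxA.trans (le_max_left A B), hzB.trans (le_max_right A B), ?_⟩
  calc M.map _ x = M.map (le_max_left A B) (M.map hxA x) := (M.map_comp _ _ _).symm
    _ = M.map (le_max_left A B) (M.map hyA y) := by rw [hA]
    _ = M.map (le_max_right A B) (M.map hyB y) := by rw [M.map_comp, M.map_comp]
    _ = M.map (le_max_right A B) (M.map hzB z) := by rw [hB]
    _ = M.map _ z := M.map_comp _ _ _

theorem VanishesAt.of_map_eq {L L' L₁ L₂ : ℝ≥0} {x : M.M L} {y : M.M L'} {h : L ≤ L₁}
    {h' : L' ≤ L₁} (hxy : M.map h x = M.map h' y) (hy : M.VanishesAt y L₂) :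
    M.VanishesAt x (max L₁ L₂) := by
  obtain ⟨hy₂, hy⟩ := hy
  refine ⟨h.trans (le_max_left L₁ L₂), ?_⟩
  calc M.map _ x = M.map (le_max_left L₁ L₂) (M.map h' y) := by rw [← hxy, M.map_comp]
    _ = M.map (le_max_right L₁ L₂) (M.map hy₂ y) := by rw [M.map_comp, M.map_comp]
    _ = 0 := by rw [hy, map_zero]

theorem SurjAt.mono {L₀ L : ℝ≥0} (hM : M.SurjAt L₀) (hL : L₀ ≤ L) : M.SurjAt L := fun _ x =>
  let ⟨y, hy⟩ := hM _ x
  ⟨M.map hL y, (eventuallyEq_map hL y).trans hy⟩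

end IndSys

namespace CtrlHom

variable {M N : IndSys} {F : ℝ≥0 → ℝ≥0} (ξ : CtrlHom M N F)

theorem eventuallyEq {L L' : ℝ≥0} {x : M.M L} {y : M.M L'} (hxy : M.EventuallyEq x y) :
    N.EventuallyEq (ξ.f L x) (ξ.f L' y) :=
  let ⟨L'', h, h', hxy⟩ := hxy
  ⟨F L'', ξ.ctrl.1 h, ξ.ctrl.1 h', by rw [ξ.compat h, ξ.compat h', hxy]⟩

theorem vanishesAt {L L' : ℝ≥0} {x : M.M L} (hx : M.VanishesAt x L') :
    N.VanishesAt (ξ.f L x) (F L') :=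
  let ⟨h, hx⟩ := hx
  ⟨ξ.ctrl.1 h, by rw [ξ.compat h, hx, map_zero]⟩

end CtrlHom

theorem CtrlEquivId.eventuallyEq {M : IndSys} {F : ℝ≥0 → ℝ≥0} {ξ : CtrlHom M M F}
    (hξ : CtrlEquivId ξ) {L : ℝ≥0} (x : M.M L) : M.EventuallyEq (ξ.f L x) x :=
  let ⟨H, _, hF, hid, heq⟩ := hξ
  ⟨H L, hF L, hid L, heq L x⟩

section Retract

variable {M N : IndSys} {F G : ℝ≥0 → ℝ≥0} (ξ : CtrlHom M N F) (η : CtrlHom N M G)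

theorem IndSys.SurjAt.of_retract {L₀ : ℝ≥0} (hM : M.SurjAt L₀)
    (hξη : CtrlEquivId (ξ.comp η)) : N.SurjAt (F L₀) := fun _ x =>
  let ⟨y, hy⟩ := hM _ (η.f _ x)
  ⟨ξ.f L₀ y, (ξ.eventuallyEq hy).trans (hξη.eventuallyEq x)⟩

theorem IndSys.KernelBound.of_retract {K H : ℝ≥0 → ℝ≥0} (hM : M.KernelBound K)
    (hF : ∀ L, F (G L) ≤ H L) (hid : ∀ L, L ≤ H L)
    (hξη : ∀ (L : ℝ≥0) (x : N.M L), N.map (hF L) (ξ.f (G L) (η.f L x)) = N.map (hid L) x) :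
    N.KernelBound (fun L => max (H L) (F (K (G L)))) := by
  rintro L x ⟨L', hx⟩
  have hηx : M.VanishesAt (η.f L x) (K (G L)) := hM _ _ ⟨G L', η.vanishesAt hx⟩
  exact IndSys.VanishesAt.of_map_eq (hξη L x).symm (ξ.vanishesAt hηx)

end Retract

theorem stmt12_general (M N : IndSys) (F G : ℝ≥0 → ℝ≥0)
    (ξ : CtrlHom M N F) (η : CtrlHom N M G)
    (h₁ : CtrlEquivId (ξ.comp η))
    (hM : UnifCtrl M) : UnifCtrl N := by
  obtain ⟨L₀, K, hK, hleK, hsurj, hker⟩ := hM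
  have hMsurj : M.SurjAt L₀ := hsurj L₀ le_rfl
  have hMker : M.KernelBound K := fun L x hx => ⟨hleK L, hker L x hx⟩
  have hNsurj := hMsurj.of_retract ξ η h₁
  obtain ⟨H, hH, hFH, hidH, hξη⟩ := h₁
  have hNker := hMker.of_retract ξ η hFH hidH hξη
  exact ⟨F L₀, fun L => max (H L) (F (K (G L))), hH.max (ξ.ctrl.comp (hK.comp η.ctrl)),
    fun L => (hidH L).trans (le_max_left _ _), fun L hL => hNsurj.mono hL,
    fun L x hx => (hNker L x hx).2⟩

/-- uniform control is preserved under controlled isomorphism. -/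
theorem stmt12 (M N : IndSys) (F G : ℝ≥0 → ℝ≥0)
    (ξ : CtrlHom M N F) (η : CtrlHom N M G)
    (h₁ : CtrlEquivId (ξ.comp η)) (h₂ : CtrlEquivId (η.comp ξ))
    (hM : UnifCtrl M) : UnifCtrl N :=
  stmt12_general M N F G ξ η h₁ hM
end

section
/- Let {M¹_L}, {M²_L}, {M³_L}, {M⁴_L}, {M⁵_L} be inductive systems over ℝ≥0 and let ξʲ : {Mʲ_L} → {Mʲ⁺¹_L} (j = 1, 2, 3, 4) be controlled homomorphisms such that the sequence {M¹_L} → {M²_L} → {M³_L} → {M⁴_L} → {M⁵_L} is asymptotically exact at {M²_L}, at {M³_L} and at {M⁴_L} (with some control functions). If {M¹_L}, {M²_L}, {M⁴_L} and {M⁵_L} are uniformly controlled, then {M³_L} is uniformly controlled. -/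
open scoped NNReal
open Filter

/-!
Pass to colimits: a controlled homomorphism induces a homomorphism of colimits, and asymptotic
exactness makes the induced sequence of colimits exact. The five-lemma chase runs in the
colimits; uniform control is used at each step to bring the element found back to a level that is
bounded by a constant (for surjectivity of `i_L`) or by a control function of `L` (for the
kernel).

Surjectivity: for `z ∈ colim M₃`, `ξ₃ z` comes from `M₄` at level `D₀`, and its image in `M₅`
vanishes at a level controlled by `D₀`; exactness at `M₄` writes it as `ξ₃ u` with `u` at a fixed
level. Then `z - u ∈ ker ξ₃ = im ξ₂` comes from `M₂` at level `B₀`.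

Kernel: if `x ∈ M₃_L` vanishes in the colimit, so does `ξ₃ x`, hence it vanishes at a level
controlled by `L`, and exactness at `M₃` gives `x = ξ₂ m` at a controlled level. In the colimit
`m ∈ ker ξ₂ = im ξ₁`, so uniform control of `M₁` and `M₂` gives `m = ξ₁ a` with `a` at level `A₀`,
at a controlled level; finally `ξ₂ ξ₁ a` vanishes at level `E₂ A₀`.
-/

-- The `+ 1` is needed because `{t | s ≤ F t}` need not contain its infimum.
noncomputable def upperInv (F : ℝ≥0 → ℝ≥0) (s : ℝ≥0) : ℝ≥0 := sInf {t | s ≤ F t} + 1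

namespace IsControl

variable {F : ℝ≥0 → ℝ≥0}

lemma of_le_self (hmono : Monotone F) (hle : ∀ L, L ≤ F L) : IsControl F :=
  ⟨hmono, tendsto_atTop_mono hle tendsto_id⟩

lemma nonempty_setOf_le (hF : IsControl F) (s : ℝ≥0) : {t | s ≤ F t}.Nonempty :=
  (hF.2.eventually_ge_atTop s).exists

lemma le_apply_upperInv (hF : IsControl F) (s : ℝ≥0) : s ≤ F (upperInv F s) := by
  obtain ⟨t, hst, ht⟩ := exists_lt_of_csInf_lt (hF.nonempty_setOf_le s)
    (lt_add_one (sInf {t | s ≤ F t}))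
  exact hst.trans (hF.1 ht.le)

lemma monotone_upperInv (hF : IsControl F) : Monotone (upperInv F) := fun _ s' hss' =>
  add_le_add_left (csInf_le_csInf (OrderBot.bddBelow _) (hF.nonempty_setOf_le s')
    fun _ ht => hss'.trans ht) 1

end IsControl

namespace IndSys

variable (M : IndSys)

attribute [simp] map_refl map_comp

instance directedSystem : DirectedSystem M.M (fun _ _ h => M.map h) :=
  ⟨M.map_refl, fun _ _ _ => M.map_comp⟩

abbrev Colim : Type _ := AddCommGroup.DirectLimit M.M (fun _ _ h => M.map h)

noncomputable def toColim (L : ℝ≥0) : M.M L →+ M.Colim :=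
  AddCommGroup.DirectLimit.of M.M (fun _ _ h => M.map h) L

variable {M}

@[simp]
lemma toColim_map {L L' : ℝ≥0} (h : L ≤ L') (x : M.M L) :
    M.toColim L' (M.map h x) = M.toColim L x :=
  AddCommGroup.DirectLimit.of_f h x

lemma exists_toColim_eq (z : M.Colim) : ∃ L x, M.toColim L x = z :=
  AddCommGroup.DirectLimit.induction_on z fun L x => ⟨L, x, rfl⟩

lemma exists_map_eq_zero_of_toColim_eq_zero {L : ℝ≥0} {x : M.M L} (hx : M.toColim L x = 0) :
    ∃ (L' : ℝ≥0) (h : L ≤ L'), M.map h x = 0 :=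
  AddCommGroup.DirectLimit.of.zero_exact L x hx

end IndSys

namespace UnifCtrlPair

variable {M : IndSys} {L₀ : ℝ≥0} {F : ℝ≥0 → ℝ≥0}

lemma le_apply (h : UnifCtrlPair M L₀ F) (L : ℝ≥0) : L ≤ F L := h.2.1 L

lemma toColim_surjective (h : UnifCtrlPair M L₀ F) {L : ℝ≥0} (hL : L₀ ≤ L) :
    Function.Surjective (M.toColim L) := by
  intro z
  obtain ⟨L', x, rfl⟩ := M.exists_toColim_eq z
  obtain ⟨y, L'', hL'', _, hyx⟩ := h.2.2.1 L hL L' x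
  exact ⟨y, by rw [← M.toColim_map hL'', hyx, M.toColim_map]⟩

lemma map_eq_zero (h : UnifCtrlPair M L₀ F) {L : ℝ≥0} {x : M.M L} (hx : M.toColim L x = 0) :
    M.map (h.le_apply L) x = 0 :=
  h.2.2.2 L x (M.exists_map_eq_zero_of_toColim_eq_zero hx)

lemma map_eq_map (h : UnifCtrlPair M L₀ F) {a b c : ℝ≥0} {x : M.M a} {y : M.M b}
    (hxy : M.toColim a x = M.toColim b y) (ha : a ≤ c) (hb : b ≤ c) :
    M.map (ha.trans (h.le_apply c)) x = M.map (hb.trans (h.le_apply c)) y := by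
  have hzero : M.toColim c (M.map ha x - M.map hb y) = 0 := by simp [hxy]
  simpa [sub_eq_zero] using h.map_eq_zero hzero

lemma of_toColim (hF : IsControl F) (hle : ∀ L, L ≤ F L)
    (hsurj : ∀ L, L₀ ≤ L → Function.Surjective (M.toColim L))
    (hker : ∀ L (x : M.M L), M.toColim L x = 0 → M.map (hle L) x = 0) :
    UnifCtrlPair M L₀ F := by
  refine ⟨hF, hle, fun L hL L' x => ?_, fun L x ⟨L', h, hx⟩ => hker L x ?_⟩
  · obtain ⟨y, hy⟩ := hsurj L hL (M.toColim L' x)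
    obtain ⟨L'', h'', hxy⟩ := M.exists_map_eq_zero_of_toColim_eq_zero
      (x := M.map (le_max_left L L') y - M.map (le_max_right L L') x) (by simp [hy])
    exact ⟨y, L'', (le_max_left L L').trans h'', (le_max_right L L').trans h'',
      by simpa [sub_eq_zero] using hxy⟩
  · rw [← M.toColim_map h, hx, map_zero]

end UnifCtrlPair

namespace CtrlHom

variable {M N : IndSys} {F : ℝ≥0 → ℝ≥0} (ξ : CtrlHom M N F)

@[simp]
lemma map_apply_map {L L' T : ℝ≥0} (h : L ≤ L') (hT : F L' ≤ T) (x : M.M L) :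
    N.map hT (ξ.f L' (M.map h x)) = N.map ((ξ.ctrl.1 h).trans hT) (ξ.f L x) := by
  rw [← ξ.compat h x, N.map_comp]

noncomputable def colimMap : M.Colim →+ N.Colim :=
  AddCommGroup.DirectLimit.lift _ _ _ (fun L => (N.toColim (F L)).comp (ξ.f L))
    fun L L' h x => by
      simp only [AddMonoidHom.comp_apply, ← ξ.compat h x, IndSys.toColim_map]

@[simp]
lemma colimMap_toColim {L : ℝ≥0} (x : M.M L) :
    ξ.colimMap (M.toColim L x) = N.toColim (F L) (ξ.f L x) :=
  AddCommGroup.DirectLimit.lift_of (G := M.M) _ _ _ _ x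

lemma apply_map_eq_zero {L L' T : ℝ≥0} {x : M.M L} (hT : F L ≤ T)
    (hx : N.map hT (ξ.f L x) = 0) (hL : L ≤ L') (hTL' : T ≤ F L') :
    ξ.f L' (M.map hL x) = 0 := by
  rw [← ξ.compat hL x, ← N.map_comp hT hTL', hx, map_zero]

lemma exists_apply_map_eq_zero {L : ℝ≥0} {x : M.M L} (hx : N.toColim (F L) (ξ.f L x) = 0) :
    ∃ (L' : ℝ≥0) (hL : L ≤ L'), ξ.f L' (M.map hL x) = 0 := by
  obtain ⟨T, hT, hxT⟩ := N.exists_map_eq_zero_of_toColim_eq_zero hx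
  obtain ⟨L', hTL'⟩ := (ξ.ctrl.2.eventually_ge_atTop T).exists
  exact ⟨max L L', le_max_left L L',
    ξ.apply_map_eq_zero hT hxT _ (hTL'.trans (ξ.ctrl.1 (le_max_right L L')))⟩

end CtrlHom

noncomputable def killLevel (F G : ℝ≥0 → ℝ≥0) (L : ℝ≥0) : ℝ≥0 := max L (upperInv F (G (F L)))

lemma le_killLevel (F G : ℝ≥0 → ℝ≥0) (L : ℝ≥0) : L ≤ killLevel F G L := le_max_left _ _

lemma IsControl.monotone_killLevel {F G : ℝ≥0 → ℝ≥0} (hF : IsControl F) (hG : Monotone G) :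
    Monotone (killLevel F G) :=
  monotone_id.max (hF.monotone_upperInv.comp (hG.comp hF.1))

lemma CtrlHom.apply_map_killLevel_eq_zero {M N : IndSys} {F G : ℝ≥0 → ℝ≥0}
    (ξ : CtrlHom M N F) {N₀ : ℝ≥0} (hN : UnifCtrlPair N N₀ G) {L : ℝ≥0} {x : M.M L}
    (hx : N.toColim (F L) (ξ.f L x) = 0) :
    ξ.f (killLevel F G L) (M.map (le_killLevel F G L) x) = 0 :=
  ξ.apply_map_eq_zero _ (hN.map_eq_zero hx) _
    ((ξ.ctrl.le_apply_upperInv _).trans (ξ.ctrl.1 (le_max_right _ _)))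

namespace AsympExactAt

variable {M N P : IndSys} {F G E E' : ℝ≥0 → ℝ≥0} {ξ : CtrlHom M N F} {η : CtrlHom N P G}

lemma comp_le (h : AsympExactAt ξ η E E') (L : ℝ≥0) : G (F L) ≤ E L := h.1.2.1 L

lemma map_apply_apply_eq_zero (h : AsympExactAt ξ η E E') (L : ℝ≥0) (x : M.M L) :
    P.map (h.comp_le L) (η.f (F L) (ξ.f L x)) = 0 := by
  obtain ⟨⟨-, -, -, hzero⟩, -⟩ := h
  exact hzero L x

lemma colimMap_colimMap (h : AsympExactAt ξ η E E') (y : M.Colim) :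
    η.colimMap (ξ.colimMap y) = 0 := by
  obtain ⟨L, x, rfl⟩ := M.exists_toColim_eq y
  rw [ξ.colimMap_toColim, η.colimMap_toColim, ← P.toColim_map (h.comp_le L),
    h.map_apply_apply_eq_zero, map_zero]

lemma le_exact (h : AsympExactAt ξ η E E') (L : ℝ≥0) : L ≤ F (E' L) := h.2.2.1 L

lemma exists_apply_eq_map (h : AsympExactAt ξ η E E') {L : ℝ≥0} {m' : N.M L}
    (hm' : η.f L m' = 0) : ∃ m : M.M (E' L), ξ.f (E' L) m = N.map (h.le_exact L) m' := by
  obtain ⟨-, -, -, hexact⟩ := h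
  exact hexact L m' hm'

lemma exists_colimMap_eq (h : AsympExactAt ξ η E E') {z : N.Colim} (hz : η.colimMap z = 0) :
    ∃ y, ξ.colimMap y = z := by
  obtain ⟨L, m', rfl⟩ := N.exists_toColim_eq z
  rw [η.colimMap_toColim] at hz
  obtain ⟨L', _, hm'⟩ := η.exists_apply_map_eq_zero hz
  obtain ⟨m, hm⟩ := h.exists_apply_eq_map hm'
  exact ⟨M.toColim _ m, by simp [hm]⟩

lemma exists_toColim_apply_eq (h : AsympExactAt ξ η E E') {N₀ P₀ : ℝ≥0} {D G' : ℝ≥0 → ℝ≥0}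
    (hN : UnifCtrlPair N N₀ D) (hP : UnifCtrlPair P P₀ G') {z : N.Colim}
    (hz : η.colimMap z = 0) :
    ∃ u : M.M (E' (killLevel G G' N₀)), N.toColim _ (ξ.f _ u) = z := by
  obtain ⟨w, rfl⟩ := hN.toColim_surjective le_rfl z
  rw [η.colimMap_toColim] at hz
  obtain ⟨u, hu⟩ := h.exists_apply_eq_map (η.apply_map_killLevel_eq_zero hP hz)
  exact ⟨u, by simp [hu]⟩

lemma exists_map_eq_map_apply (h : AsympExactAt ξ η E E') {M₀ N₀ : ℝ≥0} {A B : ℝ≥0 → ℝ≥0}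
    (hM : UnifCtrlPair M M₀ A) (hN : UnifCtrlPair N N₀ B) {K : ℝ≥0} {m : N.M K}
    (hm : P.toColim (G K) (η.f K m) = 0) :
    ∃ a : M.M M₀, N.map ((le_max_left _ _).trans (hN.le_apply _)) m =
      N.map ((le_max_right K (F M₀)).trans (hN.le_apply _)) (ξ.f M₀ a) := by
  obtain ⟨y, hy⟩ := h.exists_colimMap_eq (z := N.toColim K m) (by simpa using hm)
  obtain ⟨a, rfl⟩ := hM.toColim_surjective le_rfl y
  exact ⟨a, hN.map_eq_map (by simpa using hy.symm) (le_max_left _ _) (le_max_right _ _)⟩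

end AsympExactAt

section FiveLemma

variable {M₁ M₂ M₃ M₄ M₅ : IndSys} {F₁ F₂ F₃ F₄ : ℝ≥0 → ℝ≥0}
  {ξ₁ : CtrlHom M₁ M₂ F₁} {ξ₂ : CtrlHom M₂ M₃ F₂} {ξ₃ : CtrlHom M₃ M₄ F₃}
  {ξ₄ : CtrlHom M₄ M₅ F₄} {A B D G : ℝ≥0 → ℝ≥0} {A₀ B₀ D₀ G₀ : ℝ≥0}

theorem toColim_surjective_of_asympExactAt {E₃ E₃' E₄ E₄' : ℝ≥0 → ℝ≥0}
    (hex₃ : AsympExactAt ξ₂ ξ₃ E₃ E₃') (hex₄ : AsympExactAt ξ₃ ξ₄ E₄ E₄')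
    (h₂ : UnifCtrlPair M₂ B₀ B) (h₄ : UnifCtrlPair M₄ D₀ D) (h₅ : UnifCtrlPair M₅ G₀ G)
    {L : ℝ≥0} (hL : max (E₄' (killLevel F₄ G D₀)) (F₂ B₀) ≤ L) :
    Function.Surjective (M₃.toColim L) := by
  intro z
  obtain ⟨u, hu⟩ := hex₄.exists_toColim_apply_eq h₄ h₅ (hex₄.colimMap_colimMap z)
  obtain ⟨y, hy⟩ := hex₃.exists_colimMap_eq (z := z - M₃.toColim _ u) (by simp [hu])
  obtain ⟨n, rfl⟩ := h₂.toColim_surjective le_rfl y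
  refine ⟨M₃.map ((le_max_left _ _).trans hL) u + M₃.map ((le_max_right _ _).trans hL)
    (ξ₂.f B₀ n), ?_⟩
  rw [ξ₂.colimMap_toColim] at hy
  simp [hy]

theorem map_eq_zero_of_asympExactAt {E₂ E₂' E₃ E₃' : ℝ≥0 → ℝ≥0}
    (hex₂ : AsympExactAt ξ₁ ξ₂ E₂ E₂') (hex₃ : AsympExactAt ξ₂ ξ₃ E₃ E₃')
    (h₁ : UnifCtrlPair M₁ A₀ A) (h₂ : UnifCtrlPair M₂ B₀ B) (h₄ : UnifCtrlPair M₄ D₀ D)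
    {L T : ℝ≥0} {x : M₃.M L} (hx : M₃.toColim L x = 0) (hLT : L ≤ T)
    (hBT : F₂ (B (max (E₃' (killLevel F₃ D L)) (F₁ A₀))) ≤ T) (hET : E₂ A₀ ≤ T) :
    M₃.map hLT x = 0 := by
  have hKc : E₃' (killLevel F₃ D L) ≤ B (max (E₃' (killLevel F₃ D L)) (F₁ A₀)) :=
    (le_max_left _ _).trans (h₂.le_apply _)
  have hξ₃x : M₄.toColim (F₃ L) (ξ₃.f L x) = 0 := by
    rw [← ξ₃.colimMap_toColim, hx, map_zero]
  obtain ⟨m, hm⟩ := hex₃.exists_apply_eq_map (ξ₃.apply_map_killLevel_eq_zero h₄ hξ₃x)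
  obtain ⟨a, ha⟩ := hex₂.exists_map_eq_map_apply h₁ h₂ (m := m) (by simp [hm, hx])
  calc M₃.map hLT x = M₃.map hBT (ξ₂.f (B _) (M₂.map hKc m)) := by simp [hm]
    _ = M₃.map hBT (ξ₂.f (B _) (M₂.map ((le_max_right _ _).trans (h₂.le_apply _))
          (ξ₁.f A₀ a))) := by rw [← ha]
    _ = M₃.map hET (M₃.map (hex₂.comp_le A₀) (ξ₂.f (F₁ A₀) (ξ₁.f A₀ a))) := by simp
    _ = 0 := by rw [hex₂.map_apply_apply_eq_zero, map_zero]

end FiveLemma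

/-- the controlled five lemma for uniform control. -/
theorem stmt13 (M₁ M₂ M₃ M₄ M₅ : IndSys) (F₁ F₂ F₃ F₄ : ℝ≥0 → ℝ≥0)
    (ξ₁ : CtrlHom M₁ M₂ F₁) (ξ₂ : CtrlHom M₂ M₃ F₂)
    (ξ₃ : CtrlHom M₃ M₄ F₃) (ξ₄ : CtrlHom M₄ M₅ F₄)
    (hex₂ : ∃ E E' : ℝ≥0 → ℝ≥0, AsympExactAt ξ₁ ξ₂ E E')
    (hex₃ : ∃ E E' : ℝ≥0 → ℝ≥0, AsympExactAt ξ₂ ξ₃ E E')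
    (hex₄ : ∃ E E' : ℝ≥0 → ℝ≥0, AsympExactAt ξ₃ ξ₄ E E')
    (h₁ : UnifCtrl M₁) (h₂ : UnifCtrl M₂) (h₄ : UnifCtrl M₄) (h₅ : UnifCtrl M₅) :
    UnifCtrl M₃ := by
  obtain ⟨E₂, E₂', hex₂⟩ := hex₂
  obtain ⟨E₃, E₃', hex₃⟩ := hex₃
  obtain ⟨E₄, E₄', hex₄⟩ := hex₄
  obtain ⟨A₀, A, h₁⟩ := h₁
  obtain ⟨B₀, B, h₂⟩ := h₂
  obtain ⟨D₀, D, h₄⟩ := h₄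
  obtain ⟨G₀, G, h₅⟩ := h₅
  let H L := max (F₂ (B (max (E₃' (killLevel F₃ D L)) (F₁ A₀)))) (E₂ A₀)
  have hH : ∀ L, L ≤ H L := fun L =>
    calc L ≤ killLevel F₃ D L := le_killLevel F₃ D L
      _ ≤ F₂ (E₃' (killLevel F₃ D L)) := hex₃.le_exact _
      _ ≤ F₂ (B (max (E₃' (killLevel F₃ D L)) (F₁ A₀))) :=
        ξ₂.ctrl.1 ((le_max_left _ _).trans (h₂.le_apply _))
      _ ≤ H L := le_max_left _ _
  have hHmono : Monotone H :=
    (ξ₂.ctrl.1.comp (h₂.1.1.comp ((hex₃.2.1.1.comp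
      (ξ₃.ctrl.monotone_killLevel h₄.1.1)).max monotone_const))).max monotone_const
  exact ⟨max (E₄' (killLevel F₄ G D₀)) (F₂ B₀), H,
    .of_toColim (.of_le_self hHmono hH) hH
      (fun _ hL => toColim_surjective_of_asympExactAt hex₃ hex₄ h₂ h₄ h₅ hL)
      (fun _ _ hx => map_eq_zero_of_asympExactAt hex₂ hex₃ h₁ h₂ h₄ hx _
        (le_max_left _ _) (le_max_right _ _))⟩
end

section
/- Let m ≥ 1 and let b = (1/(m+1), …, 1/(m+1)) ∈ ℝ^{m+1}. Suppose x, x' ∈ ℝ^{m+1} satisfy: all coordinates of x and of x' are non-negative, the coordinates of x sum to 1 and the coordinates of x' sum to 1, and the minimum coordinate of each is attained at index 0 with x₀ = x'₀ = 1/(3(m+1)). For λ, λ' ∈ [0,1] set y = b + (1 − λ/4)(x − b) and y' = b + (1 − λ'/4)(x' − b). Then ‖y − y'‖₁ ≥ |λ − λ'|/(12(m+1)) and ‖y − y'‖₁ ≥ ‖x − x'‖₁/(9m(m+1)), where ‖·‖₁ denotes the ℓ¹-norm on ℝ^{m+1}. -/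
/-!
With `s = 1 - λ/4` and `s' = 1 - λ'/4` one has `y - y' = s (x - x') + (s - s') (x' - b)`.
At coordinate `0` the first summand vanishes, so `|y₀ - y'₀| = |λ - λ'| / (6(m+1))`: this is the
first bound. Summing over all coordinates, with `s ≥ 3/4` and `‖x' - b‖₁ ≤ 2`, gives
`(3/4) ‖x - x'‖₁ ≤ ‖y - y'‖₁ + |λ - λ'| / 2`, and the first bound absorbs `|λ - λ'|`.
-/

open Finset

theorem sum_abs_sub_le_two_of_mem_stdSimplex {ι : Type*} [Fintype ι] {p q : ι → ℝ}
    (hp : p ∈ stdSimplex ℝ ι) (hq : q ∈ stdSimplex ℝ ι) : ∑ i, |p i - q i| ≤ 2 :=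
  calc ∑ i, |p i - q i| ≤ ∑ i, (p i + q i) := by
        gcongr with i
        calc |p i - q i| ≤ |p i| + |q i| := abs_sub _ _
          _ = p i + q i := by rw [abs_of_nonneg (hp.1 i), abs_of_nonneg (hq.1 i)]
    _ = 2 := by rw [sum_add_distrib, hp.2, hq.2]; norm_num

theorem const_inv_mem_stdSimplex (m : ℕ) :
    (fun _ : Fin (m + 1) => 1 / ((m : ℝ) + 1)) ∈ stdSimplex ℝ (Fin (m + 1)) := by
  refine ⟨fun _ => by positivity, ?_⟩
  rw [sum_const, card_univ, Fintype.card_fin, nsmul_eq_mul]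
  push_cast
  field_simp

theorem abs_one_div_three_mul_sub_one_div {a : ℝ} (ha : 0 < a) :
    |1 / (3 * a) - 1 / a| = 2 / (3 * a) := by
  rw [show 1 / (3 * a) - 1 / a = -(2 / (3 * a)) by field_simp; ring, abs_neg,
    abs_of_pos (by positivity)]

section RadialHomotopy

variable {ι : Type*} {b x x' y y' : ι → ℝ} {s s' : ℝ}

theorem sub_eq_of_radial (hy : ∀ i, y i = b i + s * (x i - b i))
    (hy' : ∀ i, y' i = b i + s' * (x' i - b i)) (i : ι) :
    y i - y' i = s * (x i - x' i) + (s - s') * (x' i - b i) := by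
  rw [hy, hy']; ring

theorem abs_sub_of_radial_of_eq (hy : ∀ i, y i = b i + s * (x i - b i))
    (hy' : ∀ i, y' i = b i + s' * (x' i - b i)) {i : ι} (hi : x i = x' i) :
    |y i - y' i| = |s - s'| * |x' i - b i| := by
  rw [sub_eq_of_radial hy hy', hi, sub_self, mul_zero, zero_add, abs_mul]

theorem mul_sum_abs_sub_le_of_radial [Fintype ι] (hs : 0 ≤ s)
    (hy : ∀ i, y i = b i + s * (x i - b i)) (hy' : ∀ i, y' i = b i + s' * (x' i - b i)) :
    s * ∑ i, |x i - x' i| ≤ ∑ i, |y i - y' i| + |s - s'| * ∑ i, |x' i - b i| := by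
  rw [mul_sum, mul_sum, ← sum_add_distrib]
  gcongr with i
  have h := abs_sub (s * (x i - x' i) + (s - s') * (x' i - b i)) ((s - s') * (x' i - b i))
  rwa [add_sub_cancel_right, abs_mul, abs_mul, abs_of_nonneg hs, ← sub_eq_of_radial hy hy'] at h

end RadialHomotopy

theorem stmt17_general (m : ℕ) (hm : 1 ≤ m)
    (b x x' : Fin (m + 1) → ℝ)
    (hb : ∀ i, b i = 1 / ((m : ℝ) + 1))
    (hx' : ∀ i, 0 ≤ x' i)
    (hx's : ∑ i, x' i = 1)
    (hx0 : x 0 = 1 / (3 * ((m : ℝ) + 1))) (hx'0 : x' 0 = 1 / (3 * ((m : ℝ) + 1)))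
    (lam lam' : ℝ) (hlam : lam ∈ Set.Icc (0 : ℝ) 1)
    (y y' : Fin (m + 1) → ℝ)
    (hy : ∀ i, y i = b i + (1 - lam / 4) * (x i - b i))
    (hy' : ∀ i, y' i = b i + (1 - lam' / 4) * (x' i - b i)) :
    |lam - lam'| / (12 * ((m : ℝ) + 1)) ≤ ∑ i, |y i - y' i| ∧
      (∑ i, |x i - x' i|) / (9 * (m : ℝ) * ((m : ℝ) + 1)) ≤ ∑ i, |y i - y' i| := by
  have hm1 : (1 : ℝ) ≤ m := by exact_mod_cast hm
  have hscale : |(1 - lam / 4) - (1 - lam' / 4)| = |lam - lam'| / 4 := by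
    rw [show (1 - lam / 4) - (1 - lam' / 4) = (lam' - lam) / 4 by ring, abs_div, abs_sub_comm]
    norm_num
  have hy0 : |y 0 - y' 0| = |lam - lam'| / (6 * ((m : ℝ) + 1)) := by
    rw [abs_sub_of_radial_of_eq hy hy' (hx0.trans hx'0.symm), hscale, hx'0, hb,
      abs_one_div_three_mul_sub_one_div (by positivity)]
    field_simp; ring
  have hy0_le : |y 0 - y' 0| ≤ ∑ i, |y i - y' i| :=
    single_le_sum (f := fun i => |y i - y' i|) (fun i _ => abs_nonneg _) (mem_univ 0)
  have hb_mem : b ∈ stdSimplex ℝ (Fin (m + 1)) := by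
    convert const_inv_mem_stdSimplex m using 1; exact funext hb
  have hx'b := sum_abs_sub_le_two_of_mem_stdSimplex ⟨hx', hx's⟩ hb_mem
  have hsum := mul_sum_abs_sub_le_of_radial (by linarith [hlam.2]) hy hy'
  rw [hscale] at hsum
  have hX : 3 / 4 * ∑ i, |x i - x' i| ≤ ∑ i, |y i - y' i| + |lam - lam'| / 2 := by
    nlinarith [hlam.2, abs_nonneg (lam - lam'),
      sum_nonneg fun i (_ : i ∈ univ) => abs_nonneg (x i - x' i)]
  have hA : 0 ≤ ∑ i, |y i - y' i| := sum_nonneg fun i _ => abs_nonneg _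
  refine ⟨le_trans ?_ (hy0 ▸ hy0_le), ?_⟩
  · gcongr; norm_num
  · rw [hy0, div_le_iff₀ (by positivity)] at hy0_le
    rw [div_le_iff₀ (by positivity)]
    nlinarith [mul_nonneg hA (sub_nonneg.2 hm1)]

/-- ℓ¹-norm lower bounds for the radial homotopy in the standard simplex. -/
theorem stmt17 (m : ℕ) (hm : 1 ≤ m)
    (b x x' : Fin (m + 1) → ℝ)
    (hb : ∀ i, b i = 1 / ((m : ℝ) + 1))
    (hx : ∀ i, 0 ≤ x i) (hx' : ∀ i, 0 ≤ x' i)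
    (hxs : ∑ i, x i = 1) (hx's : ∑ i, x' i = 1)
    (hxmin : ∀ i, x 0 ≤ x i) (hx'min : ∀ i, x' 0 ≤ x' i)
    (hx0 : x 0 = 1 / (3 * ((m : ℝ) + 1))) (hx'0 : x' 0 = 1 / (3 * ((m : ℝ) + 1)))
    (lam lam' : ℝ) (hlam : lam ∈ Set.Icc (0 : ℝ) 1) (hlam' : lam' ∈ Set.Icc (0 : ℝ) 1)
    (y y' : Fin (m + 1) → ℝ)
    (hy : ∀ i, y i = b i + (1 - lam / 4) * (x i - b i))
    (hy' : ∀ i, y' i = b i + (1 - lam' / 4) * (x' i - b i)) :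
    |lam - lam'| / (12 * ((m : ℝ) + 1)) ≤ ∑ i, |y i - y' i| ∧
      (∑ i, |x i - x' i|) / (9 * (m : ℝ) * ((m : ℝ) + 1)) ≤ ∑ i, |y i - y' i| :=
  stmt17_general m hm b x x' hb hx' hx's hx0 hx'0 lam lam' hlam y y' hy hy'
end
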